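/- arXiv:2311.03870 — 10 statements merged into one kernel-verified Lean document; each statement's English description precedes it below -/
import Mathlib

section
/- Every discrete quasi-copula Q defined on a finite mesh δ₁×δ₂ ⊆ [0,1]² can be written as Q = α₁C₁ + α₂C₂ where C₁ and C₂ are discrete copulas on the same mesh, α₁ ≥ 1, α₂ ≤ 0, and α₁ + α₂ = 1. -/
open Finset

/-- A mesh on [0,1]: strictly increasing points from 0 to 1. -/
def IsMesh {k : ℕ} (x : Fin (k+2) → ℝ) : Prop :=
  StrictMono x ∧ x 0 = 0 ∧ x (Fin.last (k+1)) = 1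

/-- Volume of a rectangle with vertex indices (i₁,j₁),(i₂,j₂). -/
def VolR {n m : ℕ} (Q : Fin (n+2) → Fin (m+2) → ℝ)
    (i₁ i₂ : Fin (n+2)) (j₁ j₂ : Fin (m+2)) : ℝ :=
  Q i₂ j₂ - Q i₁ j₂ - Q i₂ j₁ + Q i₁ j₁

/-- Volume of the minimal rectangle R_{ij}. -/
def Vol {n m : ℕ} (Q : Fin (n+2) → Fin (m+2) → ℝ)
    (i : Fin (n+1)) (j : Fin (m+1)) : ℝ :=
  VolR Q i.castSucc i.succ j.castSucc j.succ

/-- Discrete copula on the mesh δ₁ × δ₂ given by `x` and `y`. -/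
def IsDiscCopula {n m : ℕ} (x : Fin (n+2) → ℝ) (y : Fin (m+2) → ℝ)
    (C : Fin (n+2) → Fin (m+2) → ℝ) : Prop :=
  (∀ i, C i 0 = 0) ∧ (∀ j, C 0 j = 0) ∧
  (∀ i, C i (Fin.last (m+1)) = x i) ∧ (∀ j, C (Fin.last (n+1)) j = y j) ∧
  (∀ i₁ i₂ j₁ j₂, i₁ ≤ i₂ → j₁ ≤ j₂ → 0 ≤ VolR C i₁ i₂ j₁ j₂)

/-- Discrete quasi-copula on the mesh δ₁ × δ₂ given by `x` and `y`. -/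
def IsDiscQuasiCopula {n m : ℕ} (x : Fin (n+2) → ℝ) (y : Fin (m+2) → ℝ)
    (Q : Fin (n+2) → Fin (m+2) → ℝ) : Prop :=
  (∀ i, Q i 0 = 0) ∧ (∀ j, Q 0 j = 0) ∧
  (∀ i, Q i (Fin.last (m+1)) = x i) ∧ (∀ j, Q (Fin.last (n+1)) j = y j) ∧
  (∀ i₁ i₂ j, i₁ ≤ i₂ → Q i₁ j ≤ Q i₂ j) ∧
  (∀ i j₁ j₂, j₁ ≤ j₂ → Q i j₁ ≤ Q i j₂) ∧
  (∀ i₁ i₂ j₁ j₂, |Q i₂ j₂ - Q i₁ j₁| ≤ |x i₂ - x i₁| + |y j₂ - y j₁|)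

/-- The optimal mass-domination constant α_A. -/
noncomputable def alphaA {n m : ℕ} (x : Fin (n+2) → ℝ) (y : Fin (m+2) → ℝ)
    (A : Fin (n+2) → Fin (m+2) → ℝ) : ℝ :=
  max (⨆ i : Fin (n+1),
        VolR A i.castSucc i.succ 0 (Fin.last (m+1)) / (x i.succ - x i.castSucc))
      (⨆ j : Fin (m+1),
        VolR A 0 (Fin.last (n+1)) j.castSucc j.succ / (y j.succ - y j.castSucc))

/-- The upper bound copula C̄_A. -/
noncomputable def Cbar {n m : ℕ} (x : Fin (n+2) → ℝ) (y : Fin (m+2) → ℝ)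
    (A : Fin (n+2) → Fin (m+2) → ℝ) (i : Fin (n+2)) (j : Fin (m+2)) : ℝ :=
  min (x i - VolR A 0 i j (Fin.last (m+1)) / alphaA x y A)
      (y j - VolR A i (Fin.last (n+1)) 0 j / alphaA x y A)

/-- The lower bound copula C̲_A. -/
noncomputable def Cunder {n m : ℕ} (x : Fin (n+2) → ℝ) (y : Fin (m+2) → ℝ)
    (A : Fin (n+2) → Fin (m+2) → ℝ) (i : Fin (n+2)) (j : Fin (m+2)) : ℝ :=
  max (VolR A 0 i 0 j / alphaA x y A)
      (x i + y j - 1 + VolR A i (Fin.last (n+1)) j (Fin.last (m+1)) / alphaA x y A)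

/-!
On a finite mesh the mass of a quasi-copula `Q` in a rectangle is at most its width `Δx`
(1-Lipschitz in the first variable, increasing in the second), and since the gaps of the mesh
`y` are bounded below by some `δ > 0`, this is at most `α Δx Δy` for `α = 1 + 1/δ`. Hence
`α Π - Q` is 2-increasing for the product copula `Π`, and `C₂ = (α Π - Q) / (α - 1)`
is a copula with `Q = α Π + (1 - α) C₂`.
-/

theorem StrictMono.exists_pos_le_sub {ι : Type*} [Fintype ι] [LinearOrder ι] {f : ι → ℝ}
    (hf : StrictMono f) : ∃ δ > 0, ∀ i j, i < j → δ ≤ f j - f i := by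
  classical
  set s := (univ : Finset (ι × ι)).filter (fun p => p.1 < p.2)
  have hmem : ∀ i j, i < j → (i, j) ∈ s := fun i j hij => by simp [s, hij]
  rcases s.eq_empty_or_nonempty with hs | hs
  · refine ⟨1, one_pos, fun i j hij => ?_⟩
    simpa [hs] using hmem i j hij
  · obtain ⟨p, hp, hmin⟩ := s.exists_min_image (fun p => f p.2 - f p.1) hs
    exact ⟨f p.2 - f p.1, sub_pos.2 (hf (mem_filter.1 hp).2),
      fun i j hij => hmin (i, j) (hmem i j hij)⟩

theorem volR_mul {n m : ℕ} (x : Fin (n+2) → ℝ) (y : Fin (m+2) → ℝ) (i₁ i₂ : Fin (n+2))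
    (j₁ j₂ : Fin (m+2)) :
    VolR (fun i j => x i * y j) i₁ i₂ j₁ j₂ = (x i₂ - x i₁) * (y j₂ - y j₁) := by
  simp only [VolR]
  ring

section

variable {n m : ℕ} {x : Fin (n+2) → ℝ} {y : Fin (m+2) → ℝ}

theorem isDiscCopula_mul (hx : IsMesh x) (hy : IsMesh y) :
    IsDiscCopula x y (fun i j => x i * y j) := by
  obtain ⟨hxm, hx0, hx1⟩ := hx
  obtain ⟨hym, hy0, hy1⟩ := hy
  refine ⟨fun i => by simp [hy0], fun j => by simp [hx0], fun i => by simp [hy1],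
    fun j => by simp [hx1], fun i₁ i₂ j₁ j₂ hi hj => ?_⟩
  rw [volR_mul]
  exact mul_nonneg (sub_nonneg.2 (hxm.monotone hi)) (sub_nonneg.2 (hym.monotone hj))

theorem IsDiscQuasiCopula.volR_le_abs_sub {Q : Fin (n+2) → Fin (m+2) → ℝ}
    (hQ : IsDiscQuasiCopula x y Q) {i₁ i₂ : Fin (n+2)} (hi : i₁ ≤ i₂) (j₁ j₂ : Fin (m+2)) :
    VolR Q i₁ i₂ j₁ j₂ ≤ |x i₂ - x i₁| := by
  obtain ⟨-, -, -, -, hmono, -, hlip⟩ := hQ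
  have htop : Q i₂ j₂ - Q i₁ j₂ ≤ |x i₂ - x i₁| := by
    simpa using (le_abs_self _).trans (hlip i₁ i₂ j₂ j₂)
  have hbot : Q i₁ j₁ ≤ Q i₂ j₁ := hmono i₁ i₂ j₁ hi
  simp only [VolR]
  linarith

theorem IsDiscQuasiCopula.exists_volR_le_mul_volR_mul {Q : Fin (n+2) → Fin (m+2) → ℝ}
    (hQ : IsDiscQuasiCopula x y Q) (hx : IsMesh x) (hy : IsMesh y) :
    ∃ α, 1 < α ∧ ∀ i₁ i₂ j₁ j₂, i₁ ≤ i₂ → j₁ ≤ j₂ →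
      VolR Q i₁ i₂ j₁ j₂ ≤ α * VolR (fun i j => x i * y j) i₁ i₂ j₁ j₂ := by
  obtain ⟨δ, hδ, hgap⟩ := hy.1.exists_pos_le_sub
  refine ⟨1 + 1 / δ, by simpa using hδ, fun i₁ i₂ j₁ j₂ hi hj => ?_⟩
  rw [volR_mul]
  rcases hj.eq_or_lt with rfl | hj
  · simp [VolR]
  have hdx : 0 ≤ x i₂ - x i₁ := sub_nonneg.2 (hx.1.monotone hi)
  have hdy : δ ≤ y j₂ - y j₁ := hgap j₁ j₂ hj
  have hαdy : 1 ≤ (1 + 1 / δ) * (y j₂ - y j₁) := by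
    have hquot : 1 ≤ (y j₂ - y j₁) / δ := (one_le_div hδ).2 hdy
    have hexp : (1 + 1 / δ) * (y j₂ - y j₁) = (y j₂ - y j₁) + (y j₂ - y j₁) / δ := by ring
    linarith
  calc VolR Q i₁ i₂ j₁ j₂ ≤ x i₂ - x i₁ := by
        simpa [abs_of_nonneg hdx] using hQ.volR_le_abs_sub hi j₁ j₂
    _ ≤ (x i₂ - x i₁) * ((1 + 1 / δ) * (y j₂ - y j₁)) := le_mul_of_one_le_right hdx hαdy
    _ = _ := by ring

theorem IsDiscCopula.exists_decomposition_of_volR_le {C Q : Fin (n+2) → Fin (m+2) → ℝ}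
    (hC : IsDiscCopula x y C) (hQ : IsDiscQuasiCopula x y Q) {α : ℝ} (hα : 1 < α)
    (hdom : ∀ i₁ i₂ j₁ j₂, i₁ ≤ i₂ → j₁ ≤ j₂ → VolR Q i₁ i₂ j₁ j₂ ≤ α * VolR C i₁ i₂ j₁ j₂) :
    ∃ C₂, IsDiscCopula x y C₂ ∧ ∀ i j, Q i j = α * C i j + (1 - α) * C₂ i j := by
  obtain ⟨hC0, hC0', hCx, hCy, -⟩ := hC
  obtain ⟨hQ0, hQ0', hQx, hQy, -⟩ := hQ
  have hα' : α - 1 ≠ 0 := (sub_pos.2 hα).ne'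
  refine ⟨fun i j => (α * C i j - Q i j) / (α - 1), ⟨?_, ?_, ?_, ?_, ?_⟩, fun i j => ?_⟩
  · simp [hC0, hQ0]
  · simp [hC0', hQ0']
  · intro i
    simp only [hCx, hQx]
    field_simp
  · intro j
    simp only [hCy, hQy]
    field_simp
  · intro i₁ i₂ j₁ j₂ hi hj
    have hvol : VolR (fun i j => (α * C i j - Q i j) / (α - 1)) i₁ i₂ j₁ j₂
        = (α * VolR C i₁ i₂ j₁ j₂ - VolR Q i₁ i₂ j₁ j₂) / (α - 1) := by
      simp only [VolR]
      ring
    rw [hvol]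
    exact div_nonneg (sub_nonneg.2 (hdom i₁ i₂ j₁ j₂ hi hj)) (sub_pos.2 hα).le
  · field_simp
    ring

end

theorem stmt0 {n m : ℕ} (x : Fin (n+2) → ℝ) (y : Fin (m+2) → ℝ)
    (Q : Fin (n+2) → Fin (m+2) → ℝ)
    (hx : IsMesh x) (hy : IsMesh y) (hQ : IsDiscQuasiCopula x y Q) :
    ∃ (C₁ C₂ : Fin (n+2) → Fin (m+2) → ℝ) (α₁ α₂ : ℝ),
      IsDiscCopula x y C₁ ∧ IsDiscCopula x y C₂ ∧
      1 ≤ α₁ ∧ α₂ ≤ 0 ∧ α₁ + α₂ = 1 ∧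
      ∀ i j, Q i j = α₁ * C₁ i j + α₂ * C₂ i j := by
  have hprod := isDiscCopula_mul hx hy
  obtain ⟨α, hα, hdom⟩ := hQ.exists_volR_le_mul_volR_mul hx hy
  obtain ⟨C₂, hC₂, hdecomp⟩ := hprod.exists_decomposition_of_volR_le hQ hα hdom
  exact ⟨_, C₂, α, 1 - α, hprod, hC₂, hα.le, by linarith, by ring, hdecomp⟩
end

section
/- Let Q be a discrete quasi-copula on a finite mesh and let α₁ = max_{i,j} V_Q(R_{ij})/λ²(R_{ij}) over all minimal rectangles R_{ij} of the mesh, where λ² is Lebesgue area. Then α₁ ≥ 1, and if α₁ = 1 then Q equals the restriction of the product copula Π(x,y) = xy to the mesh. -/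
open Finset

/-
Summing the volumes of the minimal rectangles telescopes, through the margins, to
`Q(1,1) - Q(0,1) - Q(1,0) + Q(0,0) = 1`, which is also the total area of the mesh. The
volume-to-area ratios therefore average to `1` with respect to area, so their maximum `α₁` is at
least `1`, and `α₁ = 1` forces every ratio to be `1`. Then `Q` and `Π` have the same volume on
every minimal rectangle and both are grounded, so they agree on the whole mesh.
-/

lemma Fin.sum_succ_sub_castSucc {k : ℕ} (f : Fin (k+1) → ℝ) :
    ∑ i : Fin k, (f i.succ - f i.castSucc) = f (Fin.last k) - f 0 := by
  induction k with
  | zero => simp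
  | succ k ih =>
    rw [Fin.sum_univ_castSucc]
    have h := ih fun j => f j.castSucc
    simp only [Fin.castSucc_zero] at h
    simp only [Fin.succ_castSucc, h, Fin.succ_last]
    ring

section RatioBound

variable {ι : Type*} [Fintype ι] {v w : ι → ℝ}

lemma le_iSup_div_mul (hw : ∀ p, 0 < w p) (p : ι) : v p ≤ (⨆ q, v q / w q) * w p :=
  (div_le_iff₀ (hw p)).1 (le_ciSup (f := fun q => v q / w q) (Finite.bddAbove_range _) p)

lemma one_le_iSup_div_of_sum_eq [Nonempty ι] (hw : ∀ p, 0 < w p)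
    (hsum : ∑ p, v p = ∑ p, w p) : 1 ≤ ⨆ p, v p / w p := by
  have hpos : 0 < ∑ p, w p := Finset.sum_pos (fun p _ => hw p) Finset.univ_nonempty
  refine le_of_mul_le_mul_right ?_ hpos
  calc 1 * ∑ p, w p = ∑ p, v p := by rw [one_mul, hsum]
    _ ≤ ∑ p, (⨆ q, v q / w q) * w p := Finset.sum_le_sum fun p _ => le_iSup_div_mul hw p
    _ = (⨆ q, v q / w q) * ∑ p, w p := (Finset.mul_sum ..).symm

lemma eq_of_iSup_div_le_one_of_sum_eq (hw : ∀ p, 0 < w p)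
    (hsum : ∑ p, v p = ∑ p, w p) (hle : (⨆ p, v p / w p) ≤ 1) : v = w := by
  have hvw : ∀ p, v p ≤ w p := fun p =>
    (le_iSup_div_mul hw p).trans (mul_le_of_le_one_left (hw p).le hle)
  funext p
  exact (Finset.sum_eq_sum_iff_of_le fun p _ => hvw p).1 hsum p (Finset.mem_univ p)

end RatioBound

lemma IsMesh.sub_castSucc_pos {k : ℕ} {x : Fin (k+2) → ℝ} (hx : IsMesh x) (i : Fin (k+1)) :
    0 < x i.succ - x i.castSucc :=
  sub_pos.2 (hx.1 Fin.castSucc_lt_succ)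

lemma IsMesh.sum_sub {k : ℕ} {x : Fin (k+2) → ℝ} (hx : IsMesh x) :
    ∑ i : Fin (k+1), (x i.succ - x i.castSucc) = 1 := by
  rw [Fin.sum_succ_sub_castSucc, hx.2.1, hx.2.2, sub_zero]

section Volume

variable {n m : ℕ}

lemma sum_vol_row (Q : Fin (n+2) → Fin (m+2) → ℝ) (i : Fin (n+1)) :
    ∑ j, Vol Q i j = VolR Q i.castSucc i.succ 0 (Fin.last (m+1)) := by
  calc ∑ j, Vol Q i j
      = ∑ j : Fin (m+1), ((Q i.succ j.succ - Q i.castSucc j.succ) -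
          (Q i.succ j.castSucc - Q i.castSucc j.castSucc)) :=
        Finset.sum_congr rfl fun j _ => by simp only [Vol, VolR]; ring
    _ = VolR Q i.castSucc i.succ 0 (Fin.last (m+1)) := by
        rw [Fin.sum_succ_sub_castSucc fun j => Q i.succ j - Q i.castSucc j, VolR]
        ring

lemma sum_vol_eq_one {x : Fin (n+2) → ℝ} {Q : Fin (n+2) → Fin (m+2) → ℝ} (hx : IsMesh x)
    (hQ0 : ∀ i, Q i 0 = 0) (hQx : ∀ i, Q i (Fin.last (m+1)) = x i) :
    ∑ p : Fin (n+1) × Fin (m+1), Vol Q p.1 p.2 = 1 := by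
  rw [Fintype.sum_prod_type, ← hx.sum_sub]
  refine Finset.sum_congr rfl fun i _ => ?_
  rw [sum_vol_row, VolR, hQ0, hQ0, hQx, hQx]
  ring

lemma sum_area_eq_one {x : Fin (n+2) → ℝ} {y : Fin (m+2) → ℝ} (hx : IsMesh x) (hy : IsMesh y) :
    ∑ p : Fin (n+1) × Fin (m+1),
      (x p.1.succ - x p.1.castSucc) * (y p.2.succ - y p.2.castSucc) = 1 := by
  simp only [Fintype.sum_prod_type, ← Finset.sum_mul_sum, hx.sum_sub, hy.sum_sub, one_mul]

lemma vol_mul (x : Fin (n+2) → ℝ) (y : Fin (m+2) → ℝ) (i : Fin (n+1)) (j : Fin (m+1)) :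
    Vol (fun i j => x i * y j) i j = (x i.succ - x i.castSucc) * (y j.succ - y j.castSucc) := by
  simp only [Vol, VolR]
  ring

lemma eq_of_vol_eq {P Q : Fin (n+2) → Fin (m+2) → ℝ}
    (hP0 : ∀ i, P i 0 = 0) (hP0' : ∀ j, P 0 j = 0)
    (hQ0 : ∀ i, Q i 0 = 0) (hQ0' : ∀ j, Q 0 j = 0)
    (hvol : ∀ i j, Vol P i j = Vol Q i j) : P = Q := by
  funext i j
  induction i using Fin.induction generalizing j with
  | zero => rw [hP0', hQ0']
  | succ i ih =>
    induction j using Fin.induction with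
    | zero => rw [hP0, hQ0]
    | succ j ihj =>
      have h := hvol i j
      simp only [Vol, VolR] at h
      linarith [ih j.succ, ih j.castSucc]

end Volume

theorem stmt1 {n m : ℕ} (x : Fin (n+2) → ℝ) (y : Fin (m+2) → ℝ)
    (Q : Fin (n+2) → Fin (m+2) → ℝ)
    (hx : IsMesh x) (hy : IsMesh y) (hQ : IsDiscQuasiCopula x y Q)
    (α₁ : ℝ)
    (hα : α₁ = ⨆ p : Fin (n+1) × Fin (m+1),
        Vol Q p.1 p.2 /
          ((x p.1.succ - x p.1.castSucc) * (y p.2.succ - y p.2.castSucc))) :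
    1 ≤ α₁ ∧ (α₁ = 1 → ∀ i j, Q i j = x i * y j) := by
  obtain ⟨hQ0, hQ0', hQx, -, -, -, -⟩ := hQ
  have harea : ∀ p : Fin (n+1) × Fin (m+1),
      0 < (x p.1.succ - x p.1.castSucc) * (y p.2.succ - y p.2.castSucc) :=
    fun p => mul_pos (hx.sub_castSucc_pos p.1) (hy.sub_castSucc_pos p.2)
  have hsum := (sum_vol_eq_one hx hQ0 hQx).trans (sum_area_eq_one hx hy).symm
  refine ⟨hα ▸ one_le_iSup_div_of_sum_eq harea hsum, fun hα₁ => ?_⟩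
  have hvol := congrFun (eq_of_iSup_div_le_one_of_sum_eq harea hsum (hα ▸ hα₁.le))
  have hprod := eq_of_vol_eq (Q := fun i j => x i * y j) hQ0 hQ0'
    (fun i => by rw [hy.2.1, mul_zero]) (fun j => by rw [hx.2.1, zero_mul])
    (fun i j => (hvol (i, j)).trans (vol_mul x y i j).symm)
  exact fun i j => congrFun (congrFun hprod i) j
end

section
/- Let A: δ₁×δ₂ → ℝ be a nonzero grounded 2-increasing function on a finite mesh, and define α_A = max over all i,j of { V_A([x_i,x_{i+1}]×[0,1])/(x_{i+1}−x_i), V_A([0,1]×[y_j,y_{j+1}])/(y_{j+1}−y_j) }. Then the function C̄_A(x,y) = min{ x − V_A([0,x]×[y,1])/α_A , y − V_A([x,1]×[0,y])/α_A } defined on δ₁×δ₂ is a discrete copula. -/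
open Finset

/-!
With `α = α_A`, `u i = α x_i - A(x_i, 1)` and `v j = α y_j - A(1, y_j)`, groundedness gives
`α · C̄_A = A + min (u i) (v j)`. The choice of `α` makes `u` and `v` monotone (every column and
row carries mass at most `α` times its width), and `min (u i) (v j)` of two monotone functions is
2-increasing, so `C̄_A` is 2-increasing. The margins follow from `u 0 = v 0 = 0` and
`u 1 = v 1 = α - A(1, 1)`; the latter also forces `α ≥ A(1, 1) > 0`.
-/

section VolR

variable {n m : ℕ}

lemma volR_add_div (P Q : Fin (n+2) → Fin (m+2) → ℝ) (c : ℝ)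
    (i₁ i₂ : Fin (n+2)) (j₁ j₂ : Fin (m+2)) :
    VolR (fun i j => (P i j + Q i j) / c) i₁ i₂ j₁ j₂ =
      (VolR P i₁ i₂ j₁ j₂ + VolR Q i₁ i₂ j₁ j₂) / c := by
  simp only [VolR]
  ring

lemma volR_min_nonneg {u : Fin (n+2) → ℝ} {v : Fin (m+2) → ℝ} (hu : Monotone u)
    (hv : Monotone v) {i₁ i₂ : Fin (n+2)} {j₁ j₂ : Fin (m+2)} (hi : i₁ ≤ i₂) (hj : j₁ ≤ j₂) :
    0 ≤ VolR (fun i j => min (u i) (v j)) i₁ i₂ j₁ j₂ := by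
  have := hu hi
  have := hv hj
  simp only [VolR, min_def]
  split_ifs <;> linarith

lemma pos_last_last_of_ne_zero {A : Fin (n+2) → Fin (m+2) → ℝ}
    (hg1 : ∀ i, A i 0 = 0) (hg2 : ∀ j, A 0 j = 0)
    (h2inc : ∀ i₁ i₂ j₁ j₂, i₁ ≤ i₂ → j₁ ≤ j₂ → 0 ≤ VolR A i₁ i₂ j₁ j₂)
    {i : Fin (n+2)} {j : Fin (m+2)} (hij : A i j ≠ 0) :
    0 < A (Fin.last (n+1)) (Fin.last (m+1)) := by
  have h₀ := h2inc 0 i 0 j (Fin.zero_le i) (Fin.zero_le j)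
  have h₁ := h2inc i (Fin.last _) j (Fin.last _) (Fin.le_last i) (Fin.le_last j)
  have h₂ := h2inc 0 i j (Fin.last _) (Fin.zero_le i) (Fin.le_last j)
  have h₃ := h2inc i (Fin.last _) 0 j (Fin.le_last i) (Fin.zero_le j)
  simp only [VolR, hg1, hg2] at h₀ h₁ h₂ h₃
  have hpos : 0 < A i j := lt_of_le_of_ne (by linarith) hij.symm
  linarith

end VolR

lemma monotone_mul_sub_of_slope_le {k : ℕ} {x f : Fin (k+2) → ℝ} {c : ℝ} (hx : StrictMono x)
    (hslope : ∀ i : Fin (k+1), (f i.succ - f i.castSucc) / (x i.succ - x i.castSucc) ≤ c) :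
    Monotone (fun i => c * x i - f i) := by
  refine Fin.monotone_iff_le_succ.2 fun i => ?_
  have hΔ : 0 < x i.succ - x i.castSucc := sub_pos.2 (hx i.castSucc_lt_succ)
  have := (div_le_iff₀ hΔ).1 (hslope i)
  linarith [mul_sub c (x i.succ) (x i.castSucc)]

section AlphaA

variable {n m : ℕ} {x : Fin (n+2) → ℝ} {y : Fin (m+2) → ℝ} {A : Fin (n+2) → Fin (m+2) → ℝ}

lemma monotone_alphaA_mul_sub_last_col (hx : StrictMono x) (hg1 : ∀ i, A i 0 = 0) :
    Monotone (fun i => alphaA x y A * x i - A i (Fin.last (m+1))) := by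
  refine monotone_mul_sub_of_slope_le hx fun i => ?_
  have h : VolR A i.castSucc i.succ 0 (Fin.last (m+1)) / (x i.succ - x i.castSucc) ≤
      alphaA x y A :=
    le_max_of_le_left (le_ciSup (f := fun k : Fin (n+1) =>
      VolR A k.castSucc k.succ 0 (Fin.last (m+1)) / (x k.succ - x k.castSucc))
      (Finite.bddAbove_range _) i)
  simpa only [VolR, hg1, sub_zero, add_zero] using h

lemma monotone_alphaA_mul_sub_last_row (hy : StrictMono y) (hg2 : ∀ j, A 0 j = 0) :
    Monotone (fun j => alphaA x y A * y j - A (Fin.last (n+1)) j) := by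
  refine monotone_mul_sub_of_slope_le hy fun j => ?_
  have h : VolR A 0 (Fin.last (n+1)) j.castSucc j.succ / (y j.succ - y j.castSucc) ≤
      alphaA x y A :=
    le_max_of_le_right (le_ciSup (f := fun k : Fin (m+1) =>
      VolR A 0 (Fin.last (n+1)) k.castSucc k.succ / (y k.succ - y k.castSucc))
      (Finite.bddAbove_range _) j)
  simpa only [VolR, hg2, sub_zero, add_zero] using h

lemma cbar_eq_add_min_div (hg1 : ∀ i, A i 0 = 0) (hg2 : ∀ j, A 0 j = 0) (hα : 0 < alphaA x y A)
    (i : Fin (n+2)) (j : Fin (m+2)) :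
    Cbar x y A i j = (A i j + min (alphaA x y A * x i - A i (Fin.last (m+1)))
      (alphaA x y A * y j - A (Fin.last (n+1)) j)) / alphaA x y A := by
  rw [← min_add_add_left, ← min_div_div_right hα.le, Cbar]
  simp only [VolR, hg1, hg2]
  congr 1 <;> field_simp <;> ring

end AlphaA

theorem stmt3 {n m : ℕ} (x : Fin (n+2) → ℝ) (y : Fin (m+2) → ℝ)
    (A : Fin (n+2) → Fin (m+2) → ℝ)
    (hx : IsMesh x) (hy : IsMesh y)
    (hg1 : ∀ i, A i 0 = 0) (hg2 : ∀ j, A 0 j = 0)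
    (h2inc : ∀ i₁ i₂ j₁ j₂, i₁ ≤ i₂ → j₁ ≤ j₂ → 0 ≤ VolR A i₁ i₂ j₁ j₂)
    (hne : ∃ i j, A i j ≠ 0) :
    IsDiscCopula x y (Cbar x y A) := by
  obtain ⟨hxm, hx0, hx1⟩ := hx
  obtain ⟨hym, hy0, hy1⟩ := hy
  obtain ⟨i, j, hij⟩ := hne
  have hu := monotone_alphaA_mul_sub_last_col (y := y) hxm hg1
  have hv := monotone_alphaA_mul_sub_last_row (x := x) hym hg2
  set α := alphaA x y A
  have hA := pos_last_last_of_ne_zero hg1 hg2 h2inc hij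
  have hα : 0 < α := by
    have hu_last := hu (Fin.zero_le (Fin.last (n+1)))
    simp only [hx0, hx1, hg2] at hu_last
    linarith
  rw [show Cbar x y A = _ from funext₂ (cbar_eq_add_min_div hg1 hg2 hα)]
  refine ⟨fun i => ?_, fun j => ?_, fun i => ?_, fun j => ?_, fun i₁ i₂ j₁ j₂ hi hj => ?_⟩
  · have hui := hu (Fin.zero_le i)
    simp only [hx0, hy0, hg1, hg2] at hui ⊢
    rw [min_eq_right (by linarith)]
    simp
  · have hvj := hv (Fin.zero_le j)
    simp only [hx0, hy0, hg1, hg2] at hvj ⊢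
    rw [min_eq_left (by linarith)]
    simp
  · have hui := hu (Fin.le_last i)
    simp only [hx1, hy1] at hui ⊢
    rw [min_eq_left (by linarith), add_sub_cancel, mul_div_cancel_left₀ _ hα.ne']
  · have hvj := hv (Fin.le_last j)
    simp only [hx1, hy1] at hvj ⊢
    rw [min_eq_right (by linarith), add_sub_cancel, mul_div_cancel_left₀ _ hα.ne']
  · rw [volR_add_div]
    exact div_nonneg (add_nonneg (h2inc _ _ _ _ hi hj) (volR_min_nonneg hu hv hi hj)) hα.le
end

section
/- Let A: δ₁×δ₂ → ℝ be a nonzero grounded 2-increasing function on a finite mesh, and define α_A = max over all i,j of { V_A([x_i,x_{i+1}]×[0,1])/(x_{i+1}−x_i), V_A([0,1]×[y_j,y_{j+1}])/(y_{j+1}−y_j) }. Then the function C̲_A(x,y) = max{ V_A([0,x]×[0,y])/α_A , x + y − 1 + V_A([x,1]×[y,1])/α_A } defined on δ₁×δ₂ is a discrete copula. -/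
/-!
Since `A` is grounded, `V_A([0,x]×[0,y]) = A(x,y)`, and `C̲_A = max (f, f + u(x) + v(y))` with
`f = A / α_A`, `u(x) = x - A(x,1)/α_A` and `v(y) = y - 1 + (A(1,1) - A(1,y))/α_A`. The definition
of `α_A` says precisely that `u` and `v` are nondecreasing. Writing `max (f, f + w) = f + w⁺`,
2-increasingness follows from that of `f` and the supermodularity of `(s, t) ↦ (s + t)⁺`; the
boundary values follow from the monotonicity of `u` between the ends of the mesh. The conditions in
the second variable are those in the first one for the transpose of `A`.
-/

open Finset

def TwoIncreasing {n m : ℕ} (Q : Fin (n+2) → Fin (m+2) → ℝ) : Prop :=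
  ∀ i₁ i₂ j₁ j₂, i₁ ≤ i₂ → j₁ ≤ j₂ → 0 ≤ VolR Q i₁ i₂ j₁ j₂

lemma max_zero_add_max_zero_le {a b c d : ℝ} (hab : a ≤ b) (hac : a ≤ c)
    (h : a + d = b + c) : max 0 b + max 0 c ≤ max 0 a + max 0 d := by
  have := le_max_left 0 a
  have := le_max_right 0 a
  have := le_max_left 0 d
  have := le_max_right 0 d
  rcases le_total b 0 with hb | hb <;> rcases le_total c 0 with hc | hc
  · rw [max_eq_left hb, max_eq_left hc]; linarith
  · rw [max_eq_left hb, max_eq_right hc]; linarith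
  · rw [max_eq_right hb, max_eq_left hc]; linarith
  · rw [max_eq_right hb, max_eq_right hc]; linarith

section

variable {n m : ℕ}

lemma TwoIncreasing.div_const {Q : Fin (n+2) → Fin (m+2) → ℝ} (hQ : TwoIncreasing Q)
    {c : ℝ} (hc : 0 ≤ c) : TwoIncreasing fun i j => Q i j / c := by
  intro i₁ i₂ j₁ j₂ hi hj
  have : VolR (fun i j => Q i j / c) i₁ i₂ j₁ j₂ = VolR Q i₁ i₂ j₁ j₂ / c := by
    simp only [VolR]; ring
  rw [this]
  exact div_nonneg (hQ i₁ i₂ j₁ j₂ hi hj) hc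

lemma TwoIncreasing.max_add {f : Fin (n+2) → Fin (m+2) → ℝ} (hf : TwoIncreasing f)
    {u : Fin (n+2) → ℝ} {v : Fin (m+2) → ℝ} (hu : Monotone u) (hv : Monotone v) :
    TwoIncreasing fun i j => max (f i j) (f i j + (u i + v j)) := by
  intro i₁ i₂ j₁ j₂ hi hj
  have hsuper := max_zero_add_max_zero_le (d := u i₂ + v j₂) (add_le_add (hu hi) le_rfl)
    (add_le_add le_rfl (hv hj)) (by ring)
  have := hf i₁ i₂ j₁ j₂ hi hj
  have hsplit : ∀ a w : ℝ, max a (a + w) = a + max 0 w := fun a w => by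
    rw [← max_add_add_left, add_zero]
  simp only [VolR, hsplit] at this ⊢
  linarith

end

section

variable {n m : ℕ} {x : Fin (n+2) → ℝ} {y : Fin (m+2) → ℝ} {A : Fin (n+2) → Fin (m+2) → ℝ}

lemma alphaA_transpose : alphaA y x (fun j i => A i j) = alphaA x y A := by
  unfold alphaA
  rw [max_comm]
  congr 1 <;> congr 1 <;> ext k <;> congr 1 <;> simp only [VolR] <;> ring

lemma Cunder_transpose (i : Fin (n+2)) (j : Fin (m+2)) :
    Cunder y x (fun j i => A i j) j i = Cunder x y A i j := by
  simp only [Cunder, alphaA_transpose, VolR]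
  congr 1 <;> ring

lemma VolR_zero_zero (hg₁ : ∀ i, A i 0 = 0) (hg₂ : ∀ j, A 0 j = 0) (i : Fin (n+2))
    (j : Fin (m+2)) : VolR A 0 i 0 j = A i j := by
  simp only [VolR, hg₁, hg₂, sub_zero, add_zero]

lemma monotone_alphaA_mul_sub (hx : StrictMono x) (hg : ∀ i, A i 0 = 0) :
    Monotone fun i => alphaA x y A * x i - A i (Fin.last (m+1)) := by
  rw [Fin.monotone_iff_le_succ]
  intro i
  have hdx : 0 < x i.succ - x i.castSucc := sub_pos.2 (hx Fin.castSucc_lt_succ)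
  have hle : VolR A i.castSucc i.succ 0 (Fin.last (m+1)) / (x i.succ - x i.castSucc)
      ≤ alphaA x y A :=
    le_max_of_le_left <| le_ciSup (f := fun k : Fin (n+1) =>
      VolR A k.castSucc k.succ 0 (Fin.last (m+1)) / (x k.succ - x k.castSucc))
      (Finite.bddAbove_range _) i
  rw [div_le_iff₀ hdx] at hle
  simp only [VolR, hg] at hle
  linarith

lemma last_last_pos (hg₁ : ∀ i, A i 0 = 0) (hg₂ : ∀ j, A 0 j = 0) (hA : TwoIncreasing A)
    (hne : ∃ i j, A i j ≠ 0) : 0 < A (Fin.last (n+1)) (Fin.last (m+1)) := by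
  obtain ⟨i, j, hij⟩ := hne
  have h₁ := hA 0 i 0 j (Fin.zero_le _) (Fin.zero_le _)
  have h₂ := hA i (Fin.last _) 0 j (Fin.le_last _) (Fin.zero_le _)
  have h₃ := hA 0 (Fin.last _) j (Fin.last _) (Fin.zero_le _) (Fin.le_last _)
  simp only [VolR, hg₁, hg₂] at h₁ h₂ h₃
  have : 0 < A i j := lt_of_le_of_ne (by linarith) hij.symm
  linarith

lemma alphaA_pos (hx : IsMesh x) (hg₁ : ∀ i, A i 0 = 0) (hg₂ : ∀ j, A 0 j = 0)
    (hA : TwoIncreasing A) (hne : ∃ i j, A i j ≠ 0) : 0 < alphaA x y A := by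
  have h := monotone_alphaA_mul_sub (y := y) hx.1 hg₁ (Fin.zero_le (Fin.last (n+1)))
  simp only [hx.2.1, hx.2.2, hg₂] at h
  linarith [last_last_pos hg₁ hg₂ hA hne]

lemma Cunder_apply_zero (hx : IsMesh x) (hy : y 0 = 0) (hg : ∀ i, A i 0 = 0)
    (hα : 0 < alphaA x y A) (i : Fin (n+2)) : Cunder x y A i 0 = 0 := by
  have h := monotone_alphaA_mul_sub (y := y) hx.1 hg (Fin.le_last i)
  simp only [hx.2.2] at h
  have hle : (A (Fin.last (n+1)) (Fin.last (m+1)) - A i (Fin.last (m+1))) / alphaA x y A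
      ≤ 1 - x i := by
    rw [div_le_iff₀ hα]; linarith
  simp only [Cunder, VolR, hg, hy, sub_zero, add_zero, zero_div]
  exact max_eq_left (by linarith)

lemma Cunder_apply_last (hx : IsMesh x) (hy : y (Fin.last (m+1)) = 1)
    (hg₁ : ∀ i, A i 0 = 0) (hg₂ : ∀ j, A 0 j = 0) (hα : 0 < alphaA x y A) (i : Fin (n+2)) :
    Cunder x y A i (Fin.last (m+1)) = x i := by
  have h := monotone_alphaA_mul_sub (y := y) hx.1 hg₁ (Fin.zero_le i)
  simp only [hx.2.1, hg₂, mul_zero] at h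
  have hle : A i (Fin.last (m+1)) / alphaA x y A ≤ x i := by
    rw [div_le_iff₀ hα]; linarith
  have hvol : VolR A i (Fin.last (n+1)) (Fin.last (m+1)) (Fin.last (m+1)) = 0 := by
    simp only [VolR]; ring
  rw [Cunder, VolR_zero_zero hg₁ hg₂, hvol, hy, zero_div, add_zero, add_sub_cancel_right]
  exact max_eq_right hle

lemma twoIncreasing_Cunder (hx : StrictMono x) (hy : StrictMono y) (hg₁ : ∀ i, A i 0 = 0)
    (hg₂ : ∀ j, A 0 j = 0) (hA : TwoIncreasing A) (hα : 0 < alphaA x y A) :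
    TwoIncreasing (Cunder x y A) := by
  set α := alphaA x y A with hα_def
  have hu := monotone_alphaA_mul_sub (y := y) hx hg₁
  have hv := monotone_alphaA_mul_sub (y := x) hy (A := fun j i => A i j) hg₂
  rw [alphaA_transpose] at hv
  have heq : Cunder x y A = fun i j => max (A i j / α) (A i j / α +
      ((α * x i - A i (Fin.last (m+1))) / α +
        ((α * y j - A (Fin.last (n+1)) j) / α +
          (A (Fin.last (n+1)) (Fin.last (m+1)) / α - 1)))) := by
    ext i j
    simp only [Cunder, VolR, hg₁, hg₂, sub_zero, add_zero, ← hα_def]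
    congr 1
    field_simp
    ring
  rw [heq]
  exact (hA.div_const hα.le).max_add (hu.div_const hα.le) ((hv.div_const hα.le).add_const _)

end

theorem stmt4 {n m : ℕ} (x : Fin (n+2) → ℝ) (y : Fin (m+2) → ℝ)
    (A : Fin (n+2) → Fin (m+2) → ℝ)
    (hx : IsMesh x) (hy : IsMesh y)
    (hg1 : ∀ i, A i 0 = 0) (hg2 : ∀ j, A 0 j = 0)
    (h2inc : ∀ i₁ i₂ j₁ j₂, i₁ ≤ i₂ → j₁ ≤ j₂ → 0 ≤ VolR A i₁ i₂ j₁ j₂)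
    (hne : ∃ i j, A i j ≠ 0) :
    IsDiscCopula x y (Cunder x y A) := by
  have hα := alphaA_pos (y := y) hx hg1 hg2 h2inc hne
  have hα' : 0 < alphaA y x (fun j i => A i j) := by rwa [alphaA_transpose]
  refine ⟨Cunder_apply_zero hx hy.2.1 hg1 hα, fun j => ?_,
    Cunder_apply_last hx hy.2.2 hg1 hg2 hα, fun j => ?_,
    twoIncreasing_Cunder hx.1 hy.1 hg1 hg2 h2inc hα⟩
  · rw [← Cunder_transpose]
    exact Cunder_apply_zero hy hx.2.1 hg2 hα' j
  · rw [← Cunder_transpose]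
    exact Cunder_apply_last hy hx.2.2 hg2 hg1 hα' j
end

section
/- Let A: δ₁×δ₂ → ℝ be a nonzero grounded 2-increasing function on a finite mesh and let C̄_A be defined by C̄_A(x,y) = min{ x − V_A([0,x]×[y,1])/α_A , y − V_A([x,1]×[0,y])/α_A }, where α_A = max_{i,j}{ V_A([x_i,x_{i+1}]×[0,1])/(x_{i+1}−x_i), V_A([0,1]×[y_j,y_{j+1}])/(y_{j+1}−y_j) }. Then α_A · V_{C̄_A}(R_{ij}) ≥ V_A(R_{ij}) for all minimal rectangles R_{ij} = [x_i,x_{i+1}]×[y_j,y_{j+1}] of the mesh. -/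
/-
Write C̄_A = min F G with F = x - P/α and G = y - Q/α, where P(x,y) = V_A([0,x]×[y,1]) and
Q(x,y) = V_A([x,1]×[0,y]). Since P and Q differ from -A by functions of one variable, αF and αG
have the same rectangle volumes as A. Because α bounds the mass of every column and every row
relative to its width, F - G is nondecreasing in x and nonincreasing in y; so on a rectangle the
minimum can only pass from F to G monotonically, and in the two mixed cases the volume of min F G
exceeds V_A/α by the slack Δx - V_A(column)/α ≥ 0, resp. Δy - V_A(row)/α ≥ 0.
Summing the column bounds gives α ≥ V_A([0,1]²) = A(1,1) > 0.
-/

open Finset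

section

variable {n m : ℕ}

theorem le_volR_min {f g : Fin (n+2) → Fin (m+2) → ℝ} {i₁ i₂ : Fin (n+2)} {j₁ j₂ : Fin (m+2)}
    {v : ℝ} (hf : v ≤ VolR f i₁ i₂ j₁ j₂) (hg : v ≤ VolR g i₁ i₂ j₁ j₂)
    (hi : ∀ j, f i₁ j - g i₁ j ≤ f i₂ j - g i₂ j)
    (hj : ∀ i, f i j₂ - g i j₂ ≤ f i j₁ - g i j₁)
    (hfg : v ≤ f i₂ j₂ - f i₁ j₂ - g i₂ j₁ + g i₁ j₁)
    (hgf : v ≤ g i₂ j₂ - f i₁ j₂ - g i₂ j₁ + f i₁ j₁) :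
    v ≤ VolR (fun i j => min (f i j) (g i j)) i₁ i₂ j₁ j₂ := by
  have := hi j₁; have := hi j₂; have := hj i₁; have := hj i₂
  simp only [VolR] at hf hg ⊢
  simp only [min_def]
  split_ifs <;> linarith

theorem volR_le_mul_volR_min {a : ℝ} (ha : 0 < a) (x : Fin (n+2) → ℝ) (y : Fin (m+2) → ℝ)
    (A : Fin (n+2) → Fin (m+2) → ℝ) {i₁ i₂ : Fin (n+2)} {j₁ j₂ : Fin (m+2)}
    (hcol : VolR A i₁ i₂ 0 (Fin.last (m+1)) ≤ a * (x i₂ - x i₁))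
    (hrow : VolR A 0 (Fin.last (n+1)) j₁ j₂ ≤ a * (y j₂ - y j₁)) :
    VolR A i₁ i₂ j₁ j₂ ≤ a * VolR (fun i j => min (x i - VolR A 0 i j (Fin.last (m+1)) / a)
      (y j - VolR A i (Fin.last (n+1)) 0 j / a)) i₁ i₂ j₁ j₂ := by
  rw [← div_le_iff₀' ha]
  rw [← div_le_iff₀' ha] at hcol hrow
  simp only [VolR, sub_div, add_div] at hcol hrow
  apply le_volR_min
  all_goals
    intros
    simp only [VolR, sub_div, add_div]
    linarith

section alphaA

variable {x : Fin (n+2) → ℝ} {y : Fin (m+2) → ℝ}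

theorem volR_column_le_alphaA_mul (hx : StrictMono x) (A : Fin (n+2) → Fin (m+2) → ℝ)
    (k : Fin (n+1)) :
    VolR A k.castSucc k.succ 0 (Fin.last (m+1)) ≤ alphaA x y A * (x k.succ - x k.castSucc) := by
  rw [← div_le_iff₀ (sub_pos.2 (hx k.castSucc_lt_succ))]
  exact le_max_of_le_left (le_ciSup_of_le (Set.finite_range _).bddAbove k le_rfl)

theorem volR_row_le_alphaA_mul (hy : StrictMono y) (A : Fin (n+2) → Fin (m+2) → ℝ)
    (k : Fin (m+1)) :
    VolR A 0 (Fin.last (n+1)) k.castSucc k.succ ≤ alphaA x y A * (y k.succ - y k.castSucc) := by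
  rw [← div_le_iff₀ (sub_pos.2 (hy k.castSucc_lt_succ))]
  exact le_max_of_le_right (le_ciSup_of_le (Set.finite_range _).bddAbove k le_rfl)

theorem volR_left_strip_le_alphaA_mul (hx : StrictMono x) (A : Fin (n+2) → Fin (m+2) → ℝ)
    (k : Fin (n+2)) :
    VolR A 0 k 0 (Fin.last (m+1)) ≤ alphaA x y A * (x k - x 0) := by
  induction k using Fin.induction with
  | zero => simp [VolR]
  | succ k ih =>
    have hsplit : VolR A 0 k.succ 0 (Fin.last (m+1))
        = VolR A 0 k.castSucc 0 (Fin.last (m+1)) + VolR A k.castSucc k.succ 0 (Fin.last (m+1)) := by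
      simp only [VolR]; ring
    linarith [volR_column_le_alphaA_mul (y := y) hx A k]

theorem volR_univ_le_alphaA (hx : IsMesh x) (A : Fin (n+2) → Fin (m+2) → ℝ) :
    VolR A 0 (Fin.last (n+1)) 0 (Fin.last (m+1)) ≤ alphaA x y A := by
  simpa [hx.2.1, hx.2.2] using volR_left_strip_le_alphaA_mul (y := y) hx.1 A (Fin.last (n+1))

end alphaA

theorem volR_univ_pos {A : Fin (n+2) → Fin (m+2) → ℝ}
    (hg1 : ∀ i, A i 0 = 0) (hg2 : ∀ j, A 0 j = 0)
    (h2inc : ∀ i₁ i₂ j₁ j₂, i₁ ≤ i₂ → j₁ ≤ j₂ → 0 ≤ VolR A i₁ i₂ j₁ j₂)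
    (hne : ∃ i j, A i j ≠ 0) :
    0 < VolR A 0 (Fin.last (n+1)) 0 (Fin.last (m+1)) := by
  obtain ⟨i, j, hij⟩ := hne
  have h₀ := h2inc 0 i 0 j (Fin.zero_le _) (Fin.zero_le _)
  have h₁ := h2inc i (Fin.last _) j (Fin.last _) (Fin.le_last _) (Fin.le_last _)
  have h₂ := h2inc 0 i j (Fin.last _) (Fin.zero_le _) (Fin.le_last _)
  have h₃ := h2inc i (Fin.last _) 0 j (Fin.le_last _) (Fin.zero_le _)
  simp only [VolR, hg1, hg2, sub_zero, add_zero] at h₀ h₁ h₂ h₃ ⊢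
  linarith [h₀.lt_of_ne' hij]

end

theorem stmt5 {n m : ℕ} (x : Fin (n+2) → ℝ) (y : Fin (m+2) → ℝ)
    (A : Fin (n+2) → Fin (m+2) → ℝ)
    (hx : IsMesh x) (hy : IsMesh y)
    (hg1 : ∀ i, A i 0 = 0) (hg2 : ∀ j, A 0 j = 0)
    (h2inc : ∀ i₁ i₂ j₁ j₂, i₁ ≤ i₂ → j₁ ≤ j₂ → 0 ≤ VolR A i₁ i₂ j₁ j₂)
    (hne : ∃ i j, A i j ≠ 0) :
    ∀ i j, Vol A i j ≤ alphaA x y A * Vol (Cbar x y A) i j := by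
  intro i j
  have hα : 0 < alphaA x y A :=
    (volR_univ_pos hg1 hg2 h2inc hne).trans_le (volR_univ_le_alphaA hx A)
  exact volR_le_mul_volR_min hα x y A
    (volR_column_le_alphaA_mul hx.1 A i) (volR_row_le_alphaA_mul hy.1 A j)
end

section
/- Let A: δ₁×δ₂ → ℝ be a nonzero grounded 2-increasing function on a finite mesh and let C̲_A(x,y) = max{ V_A([0,x]×[0,y])/α_A , x + y − 1 + V_A([x,1]×[y,1])/α_A }, where α_A = max_{i,j}{ V_A([x_i,x_{i+1}]×[0,1])/(x_{i+1}−x_i), V_A([0,1]×[y_j,y_{j+1}])/(y_{j+1}−y_j) }. Then α_A · V_{C̲_A}(R_{ij}) ≥ V_A(R_{ij}) for all minimal rectangles R_{ij} of the mesh. -/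
open Finset

/-!
Writing `α = α_A`, grounding turns `C̲_A` into `A / α + max 0 (f i + g j)` with
`f i = x i - A(i, 1) / α` and `g j = y j - A(1, j) / α + A(1, 1) / α - 1`.
Both `f` and `g` are nondecreasing, because `α` dominates the mass of every column and every
row of the mesh per unit width (which also gives `0 < A(1, 1) ≤ α`); and `(s, t) ↦ max 0 (s + t)` is supermodular, so
`max 0 (f i + g j)` is 2-increasing. Hence `α V_{C̲_A} = V_A + α V_{max 0 (f + g)} ≥ V_A`.
-/

lemma max_zero_add_add_le_add {a₁ a₂ b₁ b₂ : ℝ} (ha : a₁ ≤ a₂) (hb : b₁ ≤ b₂) :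
    max 0 (a₁ + b₂) + max 0 (a₂ + b₁) ≤ max 0 (a₁ + b₁) + max 0 (a₂ + b₂) := by
  simp only [max_def]
  split_ifs <;> linarith

lemma VolR_max_zero_add_nonneg {n m : ℕ} {f : Fin (n+2) → ℝ} {g : Fin (m+2) → ℝ}
    (hf : Monotone f) (hg : Monotone g) {i₁ i₂ : Fin (n+2)} {j₁ j₂ : Fin (m+2)}
    (hi : i₁ ≤ i₂) (hj : j₁ ≤ j₂) :
    0 ≤ VolR (fun i j => max 0 (f i + g j)) i₁ i₂ j₁ j₂ := by
  have := max_zero_add_add_le_add (hf hi) (hg hj)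
  simp only [VolR]
  linarith

section Grounded

variable {n m : ℕ} {x : Fin (n+2) → ℝ} {y : Fin (m+2) → ℝ} {A : Fin (n+2) → Fin (m+2) → ℝ}

lemma grounded_nonneg (hg1 : ∀ i, A i 0 = 0) (hg2 : ∀ j, A 0 j = 0)
    (h2inc : ∀ i₁ i₂ j₁ j₂, i₁ ≤ i₂ → j₁ ≤ j₂ → 0 ≤ VolR A i₁ i₂ j₁ j₂) (i j) :
    0 ≤ A i j := by
  simpa [VolR, hg1, hg2] using h2inc 0 i 0 j (Fin.zero_le i) (Fin.zero_le j)

lemma grounded_last_last_pos (hg1 : ∀ i, A i 0 = 0) (hg2 : ∀ j, A 0 j = 0)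
    (h2inc : ∀ i₁ i₂ j₁ j₂, i₁ ≤ i₂ → j₁ ≤ j₂ → 0 ≤ VolR A i₁ i₂ j₁ j₂)
    (hne : ∃ i j, A i j ≠ 0) :
    0 < A (Fin.last (n+1)) (Fin.last (m+1)) := by
  obtain ⟨i, j, hij⟩ := hne
  have hpos : 0 < A i j := (grounded_nonneg hg1 hg2 h2inc i j).lt_of_ne' hij
  have h1 := h2inc i (Fin.last (n+1)) 0 j (Fin.le_last i) (Fin.zero_le j)
  have h2 := h2inc 0 (Fin.last (n+1)) j (Fin.last (m+1)) (Fin.zero_le _) (Fin.le_last j)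
  simp only [VolR, hg1, hg2] at h1 h2
  linarith

lemma VolR_column_le_alphaA_mul (hx : StrictMono x) (i : Fin (n+1)) :
    VolR A i.castSucc i.succ 0 (Fin.last (m+1)) ≤ alphaA x y A * (x i.succ - x i.castSucc) := by
  have hgap : 0 < x i.succ - x i.castSucc := sub_pos.mpr (hx Fin.castSucc_lt_succ)
  have hbdd := (Set.finite_range fun i : Fin (n+1) =>
    VolR A i.castSucc i.succ 0 (Fin.last (m+1)) / (x i.succ - x i.castSucc)).bddAbove
  rw [← div_le_iff₀ hgap]
  exact (le_ciSup hbdd i).trans (le_max_left _ _)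

lemma monotone_alphaA_mul_sub_last (hx : StrictMono x) (hg1 : ∀ i, A i 0 = 0) :
    Monotone fun i => alphaA x y A * x i - A i (Fin.last (m+1)) := by
  refine Fin.monotone_iff_le_succ.2 fun i => ?_
  have := VolR_column_le_alphaA_mul (y := y) (A := A) hx i
  simp only [VolR, hg1] at this
  linarith

lemma last_last_le_alphaA (hx : IsMesh x) (hg1 : ∀ i, A i 0 = 0) (hg2 : ∀ j, A 0 j = 0) :
    A (Fin.last (n+1)) (Fin.last (m+1)) ≤ alphaA x y A := by
  have := monotone_alphaA_mul_sub_last (y := y) hx.1 hg1 (Fin.zero_le (Fin.last (n+1)))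
  simp only [hx.2.1, hx.2.2, hg2] at this
  linarith

lemma monotone_sub_div_alphaA (hx : StrictMono x) (hg1 : ∀ i, A i 0 = 0) (hα : 0 < alphaA x y A) :
    Monotone fun i => x i - A i (Fin.last (m+1)) / alphaA x y A := by
  intro a b hab
  have hdiv : ∀ c, x c - A c (Fin.last (m+1)) / alphaA x y A
      = (alphaA x y A * x c - A c (Fin.last (m+1))) / alphaA x y A := fun c => by field_simp
  simp only [hdiv]
  exact div_le_div_of_nonneg_right (monotone_alphaA_mul_sub_last hx hg1 hab) hα.le

lemma Cunder_eq (hg1 : ∀ i, A i 0 = 0) (hg2 : ∀ j, A 0 j = 0) :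
    Cunder x y A = fun i j => A i j / alphaA x y A +
      max 0 ((x i - A i (Fin.last (m+1)) / alphaA x y A) +
        (y j - A (Fin.last (n+1)) j / alphaA x y A
          + (A (Fin.last (n+1)) (Fin.last (m+1)) / alphaA x y A - 1))) := by
  ext i j
  rw [← max_add_add_left, add_zero]
  simp only [Cunder, VolR, hg1, hg2]
  congr 1 <;> ring

end Grounded

lemma mul_Vol_div_add {n m : ℕ} (P R : Fin (n+2) → Fin (m+2) → ℝ) {α : ℝ} (hα : α ≠ 0) (i j) :
    α * Vol (fun i j => P i j / α + R i j) i j = Vol P i j + α * Vol R i j := by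
  simp only [Vol, VolR]
  field_simp
  ring

theorem stmt6 {n m : ℕ} (x : Fin (n+2) → ℝ) (y : Fin (m+2) → ℝ)
    (A : Fin (n+2) → Fin (m+2) → ℝ)
    (hx : IsMesh x) (hy : IsMesh y)
    (hg1 : ∀ i, A i 0 = 0) (hg2 : ∀ j, A 0 j = 0)
    (h2inc : ∀ i₁ i₂ j₁ j₂, i₁ ≤ i₂ → j₁ ≤ j₂ → 0 ≤ VolR A i₁ i₂ j₁ j₂)
    (hne : ∃ i j, A i j ≠ 0) :
    ∀ i j, Vol A i j ≤ alphaA x y A * Vol (Cunder x y A) i j := by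
  intro i j
  have hα : 0 < alphaA x y A :=
    (grounded_last_last_pos hg1 hg2 h2inc hne).trans_le (last_last_le_alphaA hx hg1 hg2)
  have hf := monotone_sub_div_alphaA (y := y) hx.1 hg1 hα
  have hg := monotone_sub_div_alphaA (A := fun j i => A i j) hy.1 hg2
    (alphaA_transpose.symm ▸ hα)
  rw [alphaA_transpose] at hg
  have hmax := VolR_max_zero_add_nonneg hf (hg.add_const (A (Fin.last (n+1)) (Fin.last (m+1))
    / alphaA x y A - 1)) (Fin.castSucc_le_succ i) (Fin.castSucc_le_succ j)
  rw [Cunder_eq hg1 hg2, mul_Vol_div_add _ _ hα.ne']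
  exact le_add_of_nonneg_right (mul_nonneg hα.le hmax)
end

section
/- Let A: δ₁×δ₂ → ℝ be a nonzero grounded 2-increasing function on a finite mesh with constant α_A, and let C be a discrete copula on the mesh satisfying α_A·V_C(R_{ij}) ≥ V_A(R_{ij}) for all minimal rectangles R_{ij}. Then C̲_A ≤ C ≤ C̄_A pointwise, where C̲_A(x,y) = max{ V_A([0,x]×[0,y])/α_A , x+y−1+V_A([x,1]×[y,1])/α_A } and C̄_A(x,y) = min{ x−V_A([0,x]×[y,1])/α_A , y−V_A([x,1]×[0,y])/α_A }. -/
open Finset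

/-!
Mass domination on the cells propagates to every mesh rectangle: `α C - A` has nonnegative
volume on the cells, hence on every rectangle, so `V_A(R) / α ≤ V_C(R)` for all `R` (when
`α ≤ 0` this holds because `V_A(R) ≥ 0`). Taking for `R` the four rectangles spanned by the
vertex `(x, y)` and a corner of the unit square, whose `C`-volumes are `C(x,y)`,
`1 - x - y + C(x,y)`, `x - C(x,y)` and `y - C(x,y)`, gives the four bounds.
-/

section Volume

variable {n m : ℕ}

lemma VolR_nonneg_of_Vol_nonneg {Q : Fin (n+2) → Fin (m+2) → ℝ} (h : ∀ i j, 0 ≤ Vol Q i j)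
    {i₁ i₂ : Fin (n+2)} {j₁ j₂ : Fin (m+2)} (hi : i₁ ≤ i₂) (hj : j₁ ≤ j₂) :
    0 ≤ VolR Q i₁ i₂ j₁ j₂ := by
  have hstrip : ∀ i : Fin (n+1), Monotone fun j => Q i.succ j - Q i.castSucc j := by
    intro i
    refine Fin.monotone_iff_le_succ.mpr fun j => ?_
    have := h i j
    simp only [Vol, VolR] at this ⊢
    linarith
  have hcol : Monotone fun i => Q i j₂ - Q i j₁ := by
    refine Fin.monotone_iff_le_succ.mpr fun i => ?_
    have := hstrip i hj
    dsimp only at this ⊢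
    linarith
  have := hcol hi
  simp only [VolR] at this ⊢
  linarith

lemma VolR_mul_sub (α : ℝ) (A C : Fin (n+2) → Fin (m+2) → ℝ) (i₁ i₂ : Fin (n+2))
    (j₁ j₂ : Fin (m+2)) :
    VolR (fun i j => α * C i j - A i j) i₁ i₂ j₁ j₂ =
      α * VolR C i₁ i₂ j₁ j₂ - VolR A i₁ i₂ j₁ j₂ := by
  simp only [VolR]
  ring

lemma VolR_le_mul_of_Vol_le {α : ℝ} {A C : Fin (n+2) → Fin (m+2) → ℝ}
    (hdom : ∀ i j, Vol A i j ≤ α * Vol C i j)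
    {i₁ i₂ : Fin (n+2)} {j₁ j₂ : Fin (m+2)} (hi : i₁ ≤ i₂) (hj : j₁ ≤ j₂) :
    VolR A i₁ i₂ j₁ j₂ ≤ α * VolR C i₁ i₂ j₁ j₂ := by
  have hcells : ∀ i j, 0 ≤ Vol (fun i j => α * C i j - A i j) i j := fun i j => by
    rw [Vol, VolR_mul_sub]
    exact sub_nonneg.mpr (hdom i j)
  have := VolR_nonneg_of_Vol_nonneg hcells hi hj
  rwa [VolR_mul_sub, sub_nonneg] at this

end Volume

lemma div_le_of_le_mul_of_nonneg {a b α : ℝ} (ha : 0 ≤ a) (hb : 0 ≤ b) (h : a ≤ α * b) :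
    a / α ≤ b := by
  rcases le_or_gt α 0 with hα | hα
  · exact (div_nonpos_of_nonneg_of_nonpos ha hα).trans hb
  · exact div_le_of_le_mul₀ hα.le hb (by linarith)

namespace IsDiscCopula

variable {n m : ℕ} {x : Fin (n+2) → ℝ} {y : Fin (m+2) → ℝ} {C : Fin (n+2) → Fin (m+2) → ℝ}

lemma VolR_zero_zero (hC : IsDiscCopula x y C) (i : Fin (n+2)) (j : Fin (m+2)) :
    VolR C 0 i 0 j = C i j := by
  simp [VolR, hC.1, hC.2.1]

lemma VolR_last_last (hC : IsDiscCopula x y C) (hx : IsMesh x) (i : Fin (n+2)) (j : Fin (m+2)) :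
    VolR C i (Fin.last (n+1)) j (Fin.last (m+1)) = 1 - x i - y j + C i j := by
  simp only [VolR, hC.2.2.1, hC.2.2.2.1, hx.2.2]

lemma VolR_zero_last (hC : IsDiscCopula x y C) (hx : IsMesh x) (i : Fin (n+2)) (j : Fin (m+2)) :
    VolR C 0 i j (Fin.last (m+1)) = x i - C i j := by
  simp only [VolR, hC.2.2.1, hC.2.1, hx.2.1]
  ring

lemma VolR_last_zero (hC : IsDiscCopula x y C) (hy : IsMesh y) (i : Fin (n+2)) (j : Fin (m+2)) :
    VolR C i (Fin.last (n+1)) 0 j = y j - C i j := by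
  simp only [VolR, hC.2.2.2.1, hC.1, hy.2.1]
  ring

end IsDiscCopula

theorem stmt8_general {n m : ℕ} (x : Fin (n+2) → ℝ) (y : Fin (m+2) → ℝ)
    (A C : Fin (n+2) → Fin (m+2) → ℝ)
    (hx : IsMesh x) (hy : IsMesh y)
    (h2inc : ∀ i₁ i₂ j₁ j₂, i₁ ≤ i₂ → j₁ ≤ j₂ → 0 ≤ VolR A i₁ i₂ j₁ j₂)
    (hC : IsDiscCopula x y C)
    (hdom : ∀ i j, Vol A i j ≤ alphaA x y A * Vol C i j) :
    ∀ i j, Cunder x y A i j ≤ C i j ∧ C i j ≤ Cbar x y A i j := by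
  have bound : ∀ i₁ i₂ j₁ j₂, i₁ ≤ i₂ → j₁ ≤ j₂ →
      VolR A i₁ i₂ j₁ j₂ / alphaA x y A ≤ VolR C i₁ i₂ j₁ j₂ := fun _ _ _ _ hi hj =>
    div_le_of_le_mul_of_nonneg (h2inc _ _ _ _ hi hj) (hC.2.2.2.2 _ _ _ _ hi hj)
      (VolR_le_mul_of_Vol_le hdom hi hj)
  intro i j
  have lower₁ := bound 0 i 0 j (Fin.zero_le _) (Fin.zero_le _)
  have lower₂ := bound i (Fin.last _) j (Fin.last _) (Fin.le_last _) (Fin.le_last _)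
  have upper₁ := bound 0 i j (Fin.last _) (Fin.zero_le _) (Fin.le_last _)
  have upper₂ := bound i (Fin.last _) 0 j (Fin.le_last _) (Fin.zero_le _)
  rw [hC.VolR_zero_zero] at lower₁
  rw [hC.VolR_last_last hx] at lower₂
  rw [hC.VolR_zero_last hx] at upper₁
  rw [hC.VolR_last_zero hy] at upper₂
  exact ⟨max_le lower₁ (by linarith), le_min (by linarith) (by linarith)⟩

theorem stmt8 {n m : ℕ} (x : Fin (n+2) → ℝ) (y : Fin (m+2) → ℝ)
    (A C : Fin (n+2) → Fin (m+2) → ℝ)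
    (hx : IsMesh x) (hy : IsMesh y)
    (hg1 : ∀ i, A i 0 = 0) (hg2 : ∀ j, A 0 j = 0)
    (h2inc : ∀ i₁ i₂ j₁ j₂, i₁ ≤ i₂ → j₁ ≤ j₂ → 0 ≤ VolR A i₁ i₂ j₁ j₂)
    (hne : ∃ i j, A i j ≠ 0)
    (hC : IsDiscCopula x y C)
    (hdom : ∀ i j, Vol A i j ≤ alphaA x y A * Vol C i j) :
    ∀ i j, Cunder x y A i j ≤ C i j ∧ C i j ≤ Cbar x y A i j :=
  stmt8_general x y A C hx hy h2inc hC hdom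
end

section
/- For a discrete quasi-copula Q on a finite mesh, the Minkowski norm of Q equals 2α_{Q_pos} − 1, where Q_pos is the grounded function on the mesh with V_{Q_pos}(R_{ij}) = max{V_Q(R_{ij}),0} for all minimal rectangles, and α_{Q_pos} = max_{i,j}{ V_{Q_pos}([x_i,x_{i+1}]×[0,1])/(x_{i+1}−x_i), V_{Q_pos}([0,1]×[y_j,y_{j+1}])/(y_{j+1}−y_j) }. -/
open Finset

/-!
In a decomposition `Q = s B - t C` into discrete copulas, comparing values at `(1, 1)` gives
`s - t = 1`, and `V_C ≥ 0` gives `max (V_Q) 0 ≤ s V_B` on every minimal rectangle. Summing over a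
row or column strip, on which `V_B` adds up to the mesh spacing, yields `α ≤ s`, hence
`s + t = 2 s - 1 ≥ 2 α - 1`.

Conversely, by the definition of `α` the masses `max (V_Q) 0 / α` have row and column sums at most
the mesh spacings. A rank-one correction enlarges them to masses with exactly these sums, i.e. to
the minimal volumes of a copula `B` with `V_Q ≤ α V_B`. Then `C = (α B - Q) / (α - 1)` is a copula
and `Q = α B - (α - 1) C`; when `α = 1`, `Q` is itself a copula.
-/

/-- `cellInd i l = 1` iff the cell `[l, l + 1]` of the grid lies below the grid point `i`. -/
def cellInd {k : ℕ} (i : Fin (k+2)) (l : Fin (k+1)) : ℝ :=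
  if l.succ ≤ i then 1 else 0

lemma cellInd_zero {k : ℕ} (l : Fin (k+1)) : cellInd 0 l = 0 :=
  if_neg fun h => Fin.succ_ne_zero l (Fin.le_zero_iff.mp h)

lemma cellInd_last {k : ℕ} (l : Fin (k+1)) : cellInd (Fin.last (k+1)) l = 1 :=
  if_pos (Fin.le_last _)

lemma cellInd_mono {k : ℕ} {i₁ i₂ : Fin (k+2)} (h : i₁ ≤ i₂) (l : Fin (k+1)) :
    cellInd i₁ l ≤ cellInd i₂ l := by
  unfold cellInd
  split_ifs with h₁ h₂ h₂ <;> norm_num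
  exact h₂ (h₁.trans h)

lemma cellInd_succ_sub_castSucc {k : ℕ} (i l : Fin (k+1)) :
    cellInd i.succ l - cellInd i.castSucc l = if l = i then 1 else 0 := by
  simp only [cellInd, Fin.le_def, Fin.val_succ, Fin.val_castSucc, Fin.ext_iff]
  split_ifs <;> first | (exfalso; omega) | norm_num

lemma sub_zero_eq_sum_cellInd {k : ℕ} (F : Fin (k+2) → ℝ) (i : Fin (k+2)) :
    F i - F 0 = ∑ l, cellInd i l * (F l.succ - F l.castSucc) := by
  induction i using Fin.induction with
  | zero => simp [cellInd_zero]
  | succ i ih =>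
    have step : ∑ l, (cellInd i.succ l - cellInd i.castSucc l) * (F l.succ - F l.castSucc)
        = F i.succ - F i.castSucc := by
      simp [cellInd_succ_sub_castSucc]
    simp only [sub_mul, sum_sub_distrib] at step
    linarith

lemma sum_succ_sub_castSucc {k : ℕ} (F : Fin (k+2) → ℝ) :
    ∑ l : Fin (k+1), (F l.succ - F l.castSucc) = F (Fin.last (k+1)) - F 0 := by
  simp [sub_zero_eq_sum_cellInd F, cellInd_last]

def cumSum {n m : ℕ} (q : Fin (n+1) → Fin (m+1) → ℝ) (i : Fin (n+2)) (j : Fin (m+2)) : ℝ :=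
  ∑ k, ∑ l, cellInd i k * cellInd j l * q k l

lemma volR_cumSum {n m : ℕ} (q : Fin (n+1) → Fin (m+1) → ℝ)
    (i₁ i₂ : Fin (n+2)) (j₁ j₂ : Fin (m+2)) :
    VolR (cumSum q) i₁ i₂ j₁ j₂ = ∑ k, ∑ l,
      (cellInd i₂ k - cellInd i₁ k) * (cellInd j₂ l - cellInd j₁ l) * q k l := by
  simp only [VolR, cumSum, ← sum_sub_distrib, ← sum_add_distrib]
  exact sum_congr rfl fun k _ => sum_congr rfl fun l _ => by ring

lemma vol_cumSum {n m : ℕ} (q : Fin (n+1) → Fin (m+1) → ℝ) (k : Fin (n+1)) (l : Fin (m+1)) :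
    Vol (cumSum q) k l = q k l := by
  simp [Vol, volR_cumSum, cellInd_succ_sub_castSucc]

lemma cumSum_vol {n m : ℕ} (A : Fin (n+2) → Fin (m+2) → ℝ) (i : Fin (n+2)) (j : Fin (m+2)) :
    cumSum (Vol A) i j = VolR A 0 i 0 j := by
  have hrow : ∀ k : Fin (n+1), ∑ l, cellInd j l * Vol A k l
      = (A k.succ j - A k.castSucc j) - (A k.succ 0 - A k.castSucc 0) := by
    intro k
    rw [sub_zero_eq_sum_cellInd (fun j => A k.succ j - A k.castSucc j)]
    exact sum_congr rfl fun l _ => by simp only [Vol, VolR]; ring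
  have hcol := sub_zero_eq_sum_cellInd (fun i => A i j - A i 0) i
  simp only [cumSum, mul_assoc, ← mul_sum, hrow]
  simp only [VolR] at hcol ⊢
  rw [show A i j - A 0 j - A i 0 + A 0 0 = A i j - A i 0 - (A 0 j - A 0 0) by ring, hcol]
  exact sum_congr rfl fun k _ => by ring

lemma volR_eq_sum_vol {n m : ℕ} (A : Fin (n+2) → Fin (m+2) → ℝ)
    (i₁ i₂ : Fin (n+2)) (j₁ j₂ : Fin (m+2)) :
    VolR A i₁ i₂ j₁ j₂ = ∑ k, ∑ l,
      (cellInd i₂ k - cellInd i₁ k) * (cellInd j₂ l - cellInd j₁ l) * Vol A k l := by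
  rw [← volR_cumSum]
  simp only [VolR, cumSum_vol]
  ring

lemma volR_nonneg_of_vol_nonneg {n m : ℕ} {A : Fin (n+2) → Fin (m+2) → ℝ}
    (hA : ∀ k l, 0 ≤ Vol A k l) {i₁ i₂ : Fin (n+2)} {j₁ j₂ : Fin (m+2)}
    (hi : i₁ ≤ i₂) (hj : j₁ ≤ j₂) : 0 ≤ VolR A i₁ i₂ j₁ j₂ := by
  rw [volR_eq_sum_vol]
  exact sum_nonneg fun k _ => sum_nonneg fun l _ => mul_nonneg (mul_nonneg
    (sub_nonneg.2 (cellInd_mono hi k)) (sub_nonneg.2 (cellInd_mono hj l))) (hA k l)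

lemma volR_row_eq_sum_vol {n m : ℕ} (A : Fin (n+2) → Fin (m+2) → ℝ) (k : Fin (n+1)) :
    VolR A k.castSucc k.succ 0 (Fin.last (m+1)) = ∑ l, Vol A k l := by
  simp [volR_eq_sum_vol A, cellInd_succ_sub_castSucc, cellInd_last, cellInd_zero]

lemma volR_col_eq_sum_vol {n m : ℕ} (A : Fin (n+2) → Fin (m+2) → ℝ) (l : Fin (m+1)) :
    VolR A 0 (Fin.last (n+1)) l.castSucc l.succ = ∑ k, Vol A k l := by
  simp [volR_eq_sum_vol A, cellInd_succ_sub_castSucc, cellInd_last, cellInd_zero]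

lemma exists_ge_with_sums {ι κ : Type*} [Fintype ι] [Fintype κ] (p : ι → κ → ℝ)
    (a : ι → ℝ) (b : κ → ℝ) (hrow : ∀ i, ∑ j, p i j ≤ a i) (hcol : ∀ j, ∑ i, p i j ≤ b j)
    (hab : ∑ i, a i = ∑ j, b j) :
    ∃ q : ι → κ → ℝ, (∀ i j, p i j ≤ q i j) ∧ (∀ i, ∑ j, q i j = a i) ∧
      (∀ j, ∑ i, q i j = b j) := by
  set u : ι → ℝ := fun i => a i - ∑ j, p i j
  set v : κ → ℝ := fun j => b j - ∑ i, p i j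
  set S := ∑ i, u i
  have hu : ∀ i, 0 ≤ u i := fun i => sub_nonneg.2 (hrow i)
  have hv : ∀ j, 0 ≤ v j := fun j => sub_nonneg.2 (hcol j)
  have hS : ∑ j, v j = S := by
    simp only [u, v, S, sum_sub_distrib, hab, sum_comm (γ := ι)]
  have hu0 : S = 0 → ∀ i, u i = 0 := fun h i =>
    (sum_eq_zero_iff_of_nonneg fun i _ => hu i).1 h i (mem_univ i)
  have hv0 : S = 0 → ∀ j, v j = 0 := fun h j =>
    (sum_eq_zero_iff_of_nonneg fun j _ => hv j).1 (hS.trans h) j (mem_univ j)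
  -- The row and column defects have the same total `S`, so adding `u i * v j / S` corrects all
  -- row and column sums at once.
  refine ⟨fun i j => p i j + u i * v j / S, fun i j => ?_, fun i => ?_, fun j => ?_⟩
  · exact le_add_of_nonneg_right
      (div_nonneg (mul_nonneg (hu i) (hv j)) (sum_nonneg fun i _ => hu i))
  · rw [sum_add_distrib, ← sum_div, ← mul_sum, hS, mul_div_cancel_of_imp fun h => hu0 h i]
    simp [u]
  · rw [sum_add_distrib, ← sum_div, ← sum_mul, mul_comm, mul_div_cancel_of_imp fun h => hv0 h j]
    simp [v]

section Grid

variable {n m : ℕ} {x : Fin (n+2) → ℝ} {y : Fin (m+2) → ℝ}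

lemma alphaA_le_iff (hx : StrictMono x) (hy : StrictMono y) (A : Fin (n+2) → Fin (m+2) → ℝ)
    {c : ℝ} : alphaA x y A ≤ c ↔
      (∀ k : Fin (n+1),
        VolR A k.castSucc k.succ 0 (Fin.last (m+1)) ≤ c * (x k.succ - x k.castSucc)) ∧
      (∀ l : Fin (m+1),
        VolR A 0 (Fin.last (n+1)) l.castSucc l.succ ≤ c * (y l.succ - y l.castSucc)) := by
  simp only [alphaA, max_le_iff, ciSup_le_iff (Finite.bddAbove_range _)]
  exact and_congr (forall_congr' fun k => div_le_iff₀ (sub_pos.2 (hx Fin.castSucc_lt_succ)))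
    (forall_congr' fun l => div_le_iff₀ (sub_pos.2 (hy Fin.castSucc_lt_succ)))

variable (x y) in
def IsGroundedWithMargins (A : Fin (n+2) → Fin (m+2) → ℝ) : Prop :=
  (∀ i, A i 0 = 0) ∧ (∀ j, A 0 j = 0) ∧
  (∀ i, A i (Fin.last (m+1)) = x i) ∧ (∀ j, A (Fin.last (n+1)) j = y j)

lemma IsDiscQuasiCopula.isGroundedWithMargins {Q : Fin (n+2) → Fin (m+2) → ℝ}
    (hQ : IsDiscQuasiCopula x y Q) : IsGroundedWithMargins x y Q :=
  ⟨hQ.1, hQ.2.1, hQ.2.2.1, hQ.2.2.2.1⟩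

lemma isDiscCopula_iff {C : Fin (n+2) → Fin (m+2) → ℝ} :
    IsDiscCopula x y C ↔ IsGroundedWithMargins x y C ∧ ∀ k l, 0 ≤ Vol C k l :=
  ⟨fun ⟨h₁, h₂, h₃, h₄, hvol⟩ => ⟨⟨h₁, h₂, h₃, h₄⟩, fun _ _ =>
      hvol _ _ _ _ Fin.castSucc_lt_succ.le Fin.castSucc_lt_succ.le⟩,
    fun ⟨⟨h₁, h₂, h₃, h₄⟩, hvol⟩ => ⟨h₁, h₂, h₃, h₄, fun _ _ _ _ =>
      volR_nonneg_of_vol_nonneg hvol⟩⟩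

namespace IsGroundedWithMargins

variable {A : Fin (n+2) → Fin (m+2) → ℝ}

lemma sum_vol_row (hA : IsGroundedWithMargins x y A) (k : Fin (n+1)) :
    ∑ l, Vol A k l = x k.succ - x k.castSucc := by
  rw [← volR_row_eq_sum_vol]
  simp [VolR, hA.1, hA.2.2.1]

lemma sum_vol_col (hA : IsGroundedWithMargins x y A) (l : Fin (m+1)) :
    ∑ k, Vol A k l = y l.succ - y l.castSucc := by
  rw [← volR_col_eq_sum_vol]
  simp [VolR, hA.2.1, hA.2.2.2]

end IsGroundedWithMargins

lemma isGroundedWithMargins_cumSum {q : Fin (n+1) → Fin (m+1) → ℝ} (hx0 : x 0 = 0)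
    (hy0 : y 0 = 0) (hrow : ∀ k, ∑ l, q k l = x k.succ - x k.castSucc)
    (hcol : ∀ l, ∑ k, q k l = y l.succ - y l.castSucc) :
    IsGroundedWithMargins x y (cumSum q) := by
  refine ⟨fun i => by simp [cumSum, cellInd_zero], fun j => by simp [cumSum, cellInd_zero],
    fun i => ?_, fun j => ?_⟩
  · simp only [cumSum, cellInd_last, mul_one, ← mul_sum, hrow]
    rw [← sub_zero_eq_sum_cellInd, hx0, sub_zero]
  · simp only [cumSum, cellInd_last, one_mul]
    rw [sum_comm]
    simp only [← mul_sum, hcol]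
    rw [← sub_zero_eq_sum_cellInd, hy0, sub_zero]

variable {Q Qpos : Fin (n+2) → Fin (m+2) → ℝ}

lemma one_le_alphaA (hx : StrictMono x) (hy : StrictMono y) (hQ : IsGroundedWithMargins x y Q)
    (hpos : ∀ k l, Vol Qpos k l = max (Vol Q k l) 0) : 1 ≤ alphaA x y Qpos := by
  let k : Fin (n+1) := 0
  have hΔ : 0 < x k.succ - x k.castSucc := sub_pos.2 (hx Fin.castSucc_lt_succ)
  have hQpos : x k.succ - x k.castSucc ≤ VolR Qpos k.castSucc k.succ 0 (Fin.last (m+1)) := by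
    rw [← hQ.sum_vol_row, volR_row_eq_sum_vol]
    exact sum_le_sum fun l _ => (hpos k l).symm ▸ le_max_left _ _
  have hstrip := ((alphaA_le_iff hx hy Qpos).1 le_rfl).1 k
  exact le_of_mul_le_mul_right (by linarith) hΔ

lemma exists_isDiscCopula_vol_le_mul (hx : IsMesh x) (hy : IsMesh y)
    (hQ : IsGroundedWithMargins x y Q) (hpos : ∀ k l, Vol Qpos k l = max (Vol Q k l) 0) :
    ∃ B, IsDiscCopula x y B ∧ ∀ k l, Vol Q k l ≤ alphaA x y Qpos * Vol B k l := by
  set α := alphaA x y Qpos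
  have hα : 0 < α := one_pos.trans_le (one_le_alphaA hx.1 hy.1 hQ hpos)
  obtain ⟨hrow, hcol⟩ := (alphaA_le_iff hx.1 hy.1 Qpos).1 le_rfl
  obtain ⟨q, hpq, hqrow, hqcol⟩ := exists_ge_with_sums (fun k l => max (Vol Q k l) 0 / α)
    (fun k => x k.succ - x k.castSucc) (fun l => y l.succ - y l.castSucc)
    (fun k => by
      rw [← sum_div, div_le_iff₀ hα, mul_comm]
      simpa only [volR_row_eq_sum_vol, hpos] using hrow k)
    (fun l => by
      rw [← sum_div, div_le_iff₀ hα, mul_comm]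
      simpa only [volR_col_eq_sum_vol, hpos] using hcol l)
    (by rw [sum_succ_sub_castSucc, sum_succ_sub_castSucc, hx.2.1, hx.2.2, hy.2.1, hy.2.2])
  refine ⟨cumSum q, isDiscCopula_iff.2 ⟨isGroundedWithMargins_cumSum hx.2.1 hy.2.1 hqrow hqcol,
    fun k l => ?_⟩, fun k l => ?_⟩
  · rw [vol_cumSum]
    exact (div_nonneg (le_max_right _ _) hα.le).trans (hpq k l)
  · calc Vol Q k l ≤ max (Vol Q k l) 0 := le_max_left _ _
      _ = α * (max (Vol Q k l) 0 / α) := (mul_div_cancel₀ _ hα.ne').symm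
      _ ≤ α * Vol (cumSum q) k l := by
        rw [vol_cumSum]
        exact mul_le_mul_of_nonneg_left (hpq k l) hα.le

lemma isDiscCopula_of_vol_le {B : Fin (n+2) → Fin (m+2) → ℝ} (hB : IsDiscCopula x y B)
    (hQ : IsGroundedWithMargins x y Q) (hdom : ∀ k l, Vol Q k l ≤ Vol B k l) :
    IsDiscCopula x y Q := by
  obtain ⟨hBm, hBvol⟩ := isDiscCopula_iff.1 hB
  refine isDiscCopula_iff.2 ⟨hQ, fun k l => ?_⟩
  have heq : ∑ l, Vol Q k l = ∑ l, Vol B k l := by rw [hQ.sum_vol_row, hBm.sum_vol_row]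
  rw [(sum_eq_sum_iff_of_le fun l _ => hdom k l).1 heq l (mem_univ l)]
  exact hBvol k l

lemma isDiscCopula_of_vol_le_mul {B : Fin (n+2) → Fin (m+2) → ℝ} {α : ℝ}
    (hB : IsDiscCopula x y B) (hQ : IsGroundedWithMargins x y Q) (hα : 1 < α)
    (hdom : ∀ k l, Vol Q k l ≤ α * Vol B k l) :
    IsDiscCopula x y (fun i j => (α * B i j - Q i j) / (α - 1)) := by
  obtain ⟨⟨hB₁, hB₂, hB₃, hB₄⟩, -⟩ := isDiscCopula_iff.1 hB
  obtain ⟨hQ₁, hQ₂, hQ₃, hQ₄⟩ := hQ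
  refine isDiscCopula_iff.2 ⟨⟨fun i => ?_, fun j => ?_, fun i => ?_, fun j => ?_⟩, fun k l => ?_⟩
  · simp [hB₁, hQ₁]
  · simp [hB₂, hQ₂]
  · simp only [hB₃, hQ₃]; field_simp [sub_ne_zero.2 hα.ne']
  · simp only [hB₄, hQ₄]; field_simp [sub_ne_zero.2 hα.ne']
  · have : Vol (fun i j => (α * B i j - Q i j) / (α - 1)) k l
        = (α * Vol B k l - Vol Q k l) / (α - 1) := by
      simp only [Vol, VolR]; ring
    rw [this]
    exact div_nonneg (sub_nonneg.2 (hdom k l)) (sub_nonneg.2 hα.le)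

lemma exists_isDiscCopula_decomposition (hx : IsMesh x) (hy : IsMesh y)
    (hQ : IsGroundedWithMargins x y Q) (hpos : ∀ k l, Vol Qpos k l = max (Vol Q k l) 0) :
    ∃ B C, IsDiscCopula x y B ∧ IsDiscCopula x y C ∧
      ∀ i j, Q i j = alphaA x y Qpos * B i j - (alphaA x y Qpos - 1) * C i j := by
  obtain ⟨B, hB, hdom⟩ := exists_isDiscCopula_vol_le_mul hx hy hQ hpos
  rcases (one_le_alphaA hx.1 hy.1 hQ hpos).eq_or_lt with h1 | h1
  · have hQc := isDiscCopula_of_vol_le hB hQ (by simpa [← h1] using hdom)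
    exact ⟨Q, Q, hQc, hQc, fun i j => by rw [← h1]; ring⟩
  · refine ⟨B, _, hB, isDiscCopula_of_vol_le_mul hB hQ h1 hdom, fun i j => ?_⟩
    field_simp [sub_ne_zero.2 h1.ne']
    ring

lemma alphaA_le_of_eq_mul_sub_mul (hx : StrictMono x) (hy : StrictMono y)
    (hpos : ∀ k l, Vol Qpos k l = max (Vol Q k l) 0) {B C : Fin (n+2) → Fin (m+2) → ℝ}
    {s t : ℝ} (hs : 0 ≤ s) (ht : 0 ≤ t) (hB : IsDiscCopula x y B) (hC : IsDiscCopula x y C)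
    (hdec : ∀ i j, Q i j = s * B i j - t * C i j) : alphaA x y Qpos ≤ s := by
  obtain ⟨hBm, hBvol⟩ := isDiscCopula_iff.1 hB
  have hdom : ∀ k l, Vol Qpos k l ≤ s * Vol B k l := fun k l => by
    have : Vol Q k l = s * Vol B k l - t * Vol C k l := by simp only [Vol, VolR, hdec]; ring
    rw [hpos, this]
    exact max_le (sub_le_self _ (mul_nonneg ht ((isDiscCopula_iff.1 hC).2 k l)))
      (mul_nonneg hs (hBvol k l))
  refine (alphaA_le_iff hx hy Qpos).2 ⟨fun k => ?_, fun l => ?_⟩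
  · rw [volR_row_eq_sum_vol, ← hBm.sum_vol_row, mul_sum]
    exact sum_le_sum fun l _ => hdom k l
  · rw [volR_col_eq_sum_vol, ← hBm.sum_vol_col, mul_sum]
    exact sum_le_sum fun k _ => hdom k l

end Grid

theorem stmt10_general {n m : ℕ} (x : Fin (n+2) → ℝ) (y : Fin (m+2) → ℝ)
    (Q Qpos : Fin (n+2) → Fin (m+2) → ℝ)
    (hx : IsMesh x) (hy : IsMesh y) (hQ : IsDiscQuasiCopula x y Q)
    (hpos : ∀ i j, Vol Qpos i j = max (Vol Q i j) 0) :
    IsLeast {r : ℝ | ∃ s t : ℝ, ∃ B C : Fin (n+2) → Fin (m+2) → ℝ,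
        0 ≤ s ∧ 0 ≤ t ∧ IsDiscCopula x y B ∧ IsDiscCopula x y C ∧
        (∀ i j, Q i j = s * B i j - t * C i j) ∧ r = s + t}
      (2 * alphaA x y Qpos - 1) := by
  have hQm := hQ.isGroundedWithMargins
  have hα := one_le_alphaA hx.1 hy.1 hQm hpos
  obtain ⟨B, C, hB, hC, hdec⟩ := exists_isDiscCopula_decomposition hx hy hQm hpos
  refine ⟨⟨_, _, B, C, by linarith, sub_nonneg.2 hα, hB, hC, hdec, by ring⟩, ?_⟩
  rintro r ⟨s, t, B, C, hs, ht, hB, hC, hdec, rfl⟩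
  have hst : s - t = 1 := by
    have hcorner := hdec (Fin.last _) (Fin.last _)
    rw [hQm.2.2.2, hB.2.2.2.1, hC.2.2.2.1, hy.2.2] at hcorner
    linarith
  linarith [alphaA_le_of_eq_mul_sub_mul hx.1 hy.1 hpos hs ht hB hC hdec]

theorem stmt10 {n m : ℕ} (x : Fin (n+2) → ℝ) (y : Fin (m+2) → ℝ)
    (Q Qpos : Fin (n+2) → Fin (m+2) → ℝ)
    (hx : IsMesh x) (hy : IsMesh y) (hQ : IsDiscQuasiCopula x y Q)
    (hposg1 : ∀ i, Qpos i 0 = 0) (hposg2 : ∀ j, Qpos 0 j = 0)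
    (hpos : ∀ i j, Vol Qpos i j = max (Vol Q i j) 0) :
    IsLeast {r : ℝ | ∃ s t : ℝ, ∃ B C : Fin (n+2) → Fin (m+2) → ℝ,
        0 ≤ s ∧ 0 ≤ t ∧ IsDiscCopula x y B ∧ IsDiscCopula x y C ∧
        (∀ i j, Q i j = s * B i j - t * C i j) ∧ r = s + t}
      (2 * alphaA x y Qpos - 1) :=
  stmt10_general x y Q Qpos hx hy hQ hpos
end

section
/- For every quasi-copula Q on [0,1]² there exist copulas {C_j}_{j=1}^∞ and real numbers {γ_j}_{j=1}^∞ with Σ_{j=1}^∞ γ_j = 1 such that Q(x,y) = Σ_{j=1}^∞ γ_j C_j(x,y) for all x,y ∈ [0,1], where the series converges uniformly on [0,1]². -/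
open Set

/-- A bivariate copula (conditions imposed on the unit square). -/
def IsCopula (C : ℝ → ℝ → ℝ) : Prop :=
  (∀ x ∈ Icc (0:ℝ) 1, C x 0 = 0 ∧ C 0 x = 0 ∧ C x 1 = x ∧ C 1 x = x) ∧
  (∀ x₁ ∈ Icc (0:ℝ) 1, ∀ x₂ ∈ Icc (0:ℝ) 1, ∀ y₁ ∈ Icc (0:ℝ) 1, ∀ y₂ ∈ Icc (0:ℝ) 1,
    x₁ ≤ x₂ → y₁ ≤ y₂ → 0 ≤ C x₂ y₂ - C x₁ y₂ - C x₂ y₁ + C x₁ y₁)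

/-- A bivariate quasi-copula (conditions imposed on the unit square). -/
def IsQuasiCopula (Q : ℝ → ℝ → ℝ) : Prop :=
  (∀ x ∈ Icc (0:ℝ) 1, Q x 0 = 0 ∧ Q 0 x = 0 ∧ Q x 1 = x ∧ Q 1 x = x) ∧
  (∀ x₁ ∈ Icc (0:ℝ) 1, ∀ x₂ ∈ Icc (0:ℝ) 1, ∀ y ∈ Icc (0:ℝ) 1,
    x₁ ≤ x₂ → Q x₁ y ≤ Q x₂ y) ∧
  (∀ x ∈ Icc (0:ℝ) 1, ∀ y₁ ∈ Icc (0:ℝ) 1, ∀ y₂ ∈ Icc (0:ℝ) 1,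
    y₁ ≤ y₂ → Q x y₁ ≤ Q x y₂) ∧
  (∀ x₁ ∈ Icc (0:ℝ) 1, ∀ x₂ ∈ Icc (0:ℝ) 1, ∀ y₁ ∈ Icc (0:ℝ) 1, ∀ y₂ ∈ Icc (0:ℝ) 1,
    |Q x₂ y₂ - Q x₁ y₁| ≤ |x₂ - x₁| + |y₂ - y₁|)

/-- Q-volume of the dyadic rectangle R_{ij}^n = [i/2^n,(i+1)/2^n] × [j/2^n,(j+1)/2^n]
(indices shifted by one with respect to the paper). -/
noncomputable def dyadVol (Q : ℝ → ℝ → ℝ) (n : ℕ) (i j : Fin (2^n)) : ℝ :=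
  Q (((i : ℕ) + 1) / 2^n) (((j : ℕ) + 1) / 2^n)
    - Q ((i : ℕ) / 2^n) (((j : ℕ) + 1) / 2^n)
    - Q (((i : ℕ) + 1) / 2^n) ((j : ℕ) / 2^n)
    + Q ((i : ℕ) / 2^n) ((j : ℕ) / 2^n)

/-- The set of all row/column sums of positive parts of dyadic volumes, normalized by
strip width; α_Q is its supremum. -/
noncomputable def alphaSet (Q : ℝ → ℝ → ℝ) : Set ℝ :=
  {r | ∃ n : ℕ, 1 ≤ n ∧
    ((∃ i : Fin (2^n), r = 2^n * ∑ j : Fin (2^n), max (dyadVol Q n i j) 0) ∨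
     (∃ j : Fin (2^n), r = 2^n * ∑ i : Fin (2^n), max (dyadVol Q n i j) 0))}

/-!
The bilinear interpolation `gridInterp Q m` of `Q` on the grid of mesh `1 / m` is `2 / m`-close to
`Q` by the Lipschitz property. The Lipschitz property also bounds the grid volumes by `1 / m`, so
`m` times the matrix of grid volumes has unit row and column sums and entries at most `1`; such a
matrix is `(m + 1) A - m B` with `A`, `B` doubly stochastic. Hence
`gridInterp Q m = (m + 1) C_A - m C_B` for checkerboard copulas `C_A`, `C_B`, and telescoping over
`m` gives a series of copulas. Its coefficients grow, so each increment is spread over many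
interleaved copies with small coefficients; every partial sum is then close to some
`gridInterp Q m`, and the series converges uniformly.
-/

open Finset Filter Topology

/-- The distribution function of the uniform law on `[i / m, (i + 1) / m]`. -/
noncomputable def cellCDF (m i : ℕ) (x : ℝ) : ℝ := min (max (m * x - i) 0) 1

theorem cellCDF_apply_zero (m i : ℕ) : cellCDF m i 0 = 0 := by
  simp [cellCDF]

theorem cellCDF_apply_one {m i : ℕ} (hi : i < m) : cellCDF m i 1 = 1 := by
  have : (i : ℝ) + 1 ≤ m := by exact_mod_cast hi
  rw [cellCDF, mul_one, min_eq_right (le_max_of_le_left (by linarith))]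

theorem cellCDF_mono (m i : ℕ) : Monotone (cellCDF m i) := fun _ _ h => by
  unfold cellCDF
  gcongr

/-- Summation by parts against the `cellCDF m i x` is linear interpolation between the grid points
`k / m ≤ x ≤ (k + 1) / m`. -/
theorem exists_sum_cellCDF_mul_sub {m : ℕ} (hm : 0 < m) {x : ℝ} (hx : x ∈ Icc (0 : ℝ) 1) :
    ∃ k < m, ∃ u ∈ Icc (0 : ℝ) 1, (k : ℝ) + u = m * x ∧ ∀ G : ℕ → ℝ,
      ∑ i : Fin m, cellCDF m i x * (G (i + 1) - G i) = (1 - u) * G k + u * G (k + 1) - G 0 := by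
  have hmx : 0 ≤ (m : ℝ) * x := mul_nonneg (Nat.cast_nonneg m) hx.1
  have hmx' : (m : ℝ) * x ≤ m := mul_le_of_le_one_right (Nat.cast_nonneg m) hx.2
  set k := min ⌊(m : ℝ) * x⌋₊ (m - 1) with hk_def
  have hk : k < m := (min_le_right _ _).trans_lt (Nat.sub_lt hm one_pos)
  have hk₁ : (k : ℝ) ≤ m * x := ((Nat.cast_le.2 (min_le_left _ _)).trans (Nat.floor_le hmx))
  have hk₂ : (m : ℝ) * x ≤ k + 1 := by
    rcases le_total ⌊(m : ℝ) * x⌋₊ (m - 1) with h | h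
    · rw [hk_def, min_eq_left h]
      exact (Nat.lt_floor_add_one _).le
    · rw [hk_def, min_eq_right h, Nat.cast_sub hm, Nat.cast_one, sub_add_cancel]
      exact hmx'
  refine ⟨k, hk, m * x - k, ⟨by linarith, by linarith⟩, by ring, fun G => ?_⟩
  have hval : ∀ i, cellCDF m i x = if i < k then 1 else if i = k then m * x - k else 0 := by
    intro i
    unfold cellCDF
    split_ifs with h₁ h₂
    · have : (i : ℝ) + 1 ≤ k := by exact_mod_cast h₁
      exact min_eq_right (le_max_of_le_left (by linarith))
    · rw [h₂, max_eq_left (by linarith), min_eq_left (by linarith)]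
    · have : (k : ℝ) + 1 ≤ i := by exact_mod_cast (by omega : k + 1 ≤ i)
      rw [max_eq_right (by linarith), min_eq_left zero_le_one]
  rw [Fin.sum_univ_eq_sum_range (fun i => cellCDF m i x * (G (i + 1) - G i)),
    ← sum_range_add_sum_Ico _ hk, sum_range_succ]
  simp_rw [hval]
  rw [sum_congr rfl fun i hi => by rw [if_pos (mem_range.1 hi), one_mul], sum_range_sub,
    sum_eq_zero fun i hi => by
      rw [if_neg (by simp at hi; omega), if_neg (by simp at hi; omega), zero_mul]]
  simp only [lt_irrefl, if_false, if_true]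
  ring

theorem sum_cellCDF {m : ℕ} (hm : 0 < m) {x : ℝ} (hx : x ∈ Icc (0 : ℝ) 1) :
    ∑ i : Fin m, cellCDF m i x = m * x := by
  obtain ⟨k, -, u, -, hku, hsum⟩ := exists_sum_cellCDF_mul_sub hm hx
  have := hsum (fun i => i)
  push_cast at this
  simp only [add_sub_cancel_left, mul_one, sub_zero] at this
  linarith

/-- The checkerboard copula with density `m * A i j` on the cell
`[i / m, (i + 1) / m] × [j / m, (j + 1) / m]`. -/
noncomputable def checkerboard {m : ℕ} (A : Matrix (Fin m) (Fin m) ℝ) (x y : ℝ) : ℝ :=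
  (m : ℝ)⁻¹ * ∑ i, ∑ j, A i j * (cellCDF m i x * cellCDF m j y)

theorem isCopula_checkerboard {m : ℕ} (hm : 0 < m) {A : Matrix (Fin m) (Fin m) ℝ}
    (hA : A ∈ doublyStochastic ℝ (Fin m)) : IsCopula (checkerboard A) := by
  rw [mem_doublyStochastic_iff_sum] at hA
  obtain ⟨hA₀, hrow, hcol⟩ := hA
  have hm' : (m : ℝ) ≠ 0 := by positivity
  refine ⟨fun x hx => ⟨?_, ?_, ?_, ?_⟩, fun x₁ _ x₂ _ y₁ _ y₂ _ hx hy => ?_⟩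
  · simp [checkerboard, cellCDF_apply_zero]
  · simp [checkerboard, cellCDF_apply_zero]
  · simp only [checkerboard, cellCDF_apply_one (Fin.is_lt _), mul_one, ← sum_mul, hrow, one_mul,
      sum_cellCDF hm hx, inv_mul_cancel_left₀ hm']
  · simp only [checkerboard, cellCDF_apply_one (Fin.is_lt _), one_mul]
    rw [sum_comm]
    simp only [← sum_mul, hcol, one_mul, sum_cellCDF hm hx, inv_mul_cancel_left₀ hm']
  · have h : checkerboard A x₂ y₂ - checkerboard A x₁ y₂ - checkerboard A x₂ y₁ +
        checkerboard A x₁ y₁ = (m : ℝ)⁻¹ * ∑ i, ∑ j, A i j *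
          ((cellCDF m i x₂ - cellCDF m i x₁) * (cellCDF m j y₂ - cellCDF m j y₁)) := by
      simp only [checkerboard, ← mul_sub, ← mul_add, ← sum_sub_distrib, ← sum_add_distrib]
      congr 1
      exact sum_congr rfl fun i _ => sum_congr rfl fun j _ => by ring
    rw [h]
    exact mul_nonneg (by positivity) (sum_nonneg fun i _ => sum_nonneg fun j _ =>
      mul_nonneg (hA₀ i j) (mul_nonneg (sub_nonneg.2 (cellCDF_mono m i hx))
        (sub_nonneg.2 (cellCDF_mono m j hy))))

theorem IsCopula.abs_le_one {C : ℝ → ℝ → ℝ} (hC : IsCopula C) {x y : ℝ}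
    (hx : x ∈ Icc (0 : ℝ) 1) (hy : y ∈ Icc (0 : ℝ) 1) : |C x y| ≤ 1 := by
  have h0 : (0 : ℝ) ∈ Icc (0 : ℝ) 1 := left_mem_Icc.2 zero_le_one
  have h1 : (1 : ℝ) ∈ Icc (0 : ℝ) 1 := right_mem_Icc.2 zero_le_one
  have hlow := hC.2 0 h0 x hx 0 h0 y hy hx.1 hy.1
  have hup := hC.2 0 h0 x hx y hy 1 h1 hx.1 hy.2
  simp only [(hC.1 x hx).1, (hC.1 x hx).2.2.1, (hC.1 y hy).2.1, (hC.1 0 h0).1,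
    (hC.1 1 h1).2.1] at hlow hup
  rw [abs_le]
  constructor <;> linarith [hx.2]

theorem Matrix.exists_mem_doublyStochastic_eq_sub {n : Type*} [Fintype n] [DecidableEq n]
    (W : Matrix n n ℝ) (hrow : ∀ i, ∑ j, W i j = 1) (hcol : ∀ j, ∑ i, W i j = 1)
    (hle : ∀ i j, W i j ≤ 1) :
    ∃ A ∈ doublyStochastic ℝ n, ∃ B ∈ doublyStochastic ℝ n,
      W = (Fintype.card n + 1 : ℝ) • A - (Fintype.card n : ℝ) • B := by
  set m : ℝ := (Fintype.card n : ℝ)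
  set r : n → ℝ := fun i => ∑ j, (W i j)⁺
  set c : n → ℝ := fun j => ∑ i, (W i j)⁺
  have hpos_le : ∀ i j, (W i j)⁺ ≤ 1 := fun i j => max_le (hle i j) zero_le_one
  have hr : ∀ i, r i ≤ m := fun i => by
    simpa using sum_le_card_nsmul univ (fun j => (W i j)⁺) 1 fun j _ => hpos_le i j
  have hc : ∀ j, c j ≤ m := fun j => by
    simpa using sum_le_card_nsmul univ (fun i => (W i j)⁺) 1 fun i _ => hpos_le i j
  have hneg : ∀ i j, (W i j)⁻ = (W i j)⁺ - W i j := fun i j => by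
    linarith [posPart_sub_negPart (W i j)]
  -- `δ` is the product coupling of the row defects `m + 1 - r i` and column defects `m + 1 - c j`
  set D : ℝ := ∑ i, (m + 1 - r i)
  have hD : D = ∑ j, (m + 1 - c j) := by
    simp only [D, r, c, sum_sub_distrib]
    rw [sum_comm]
  have hD_pos : ∀ i, 0 < D := fun i =>
    lt_of_lt_of_le (by linarith [hr i]) (single_le_sum (fun i _ => by linarith [hr i]) (mem_univ i))
  set δ : n → n → ℝ := fun i j => (m + 1 - r i) * (m + 1 - c j) / D
  have hδ : ∀ i j, 0 ≤ δ i j := fun i j =>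
    div_nonneg (mul_nonneg (by linarith [hr i]) (by linarith [hc j])) (hD_pos i).le
  have hδrow : ∀ i, ∑ j, δ i j = m + 1 - r i := fun i => by
    rw [← sum_div, ← mul_sum, ← hD, mul_div_cancel_right₀ _ (hD_pos i).ne']
  have hδcol : ∀ j, ∑ i, δ i j = m + 1 - c j := fun j => by
    rw [← sum_div, ← sum_mul, mul_div_cancel_left₀ _ (hD_pos j).ne']
  obtain ⟨A, hA, hA'⟩ := (exists_mem_doublyStochastic_eq_smul_iff (s := m + 1)
    (M := Matrix.of fun i j => (W i j)⁺ + δ i j) (by simp only [m]; positivity)).2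
      ⟨fun i j => add_nonneg (posPart_nonneg _) (hδ i j),
       fun i => by simp [sum_add_distrib, hδrow, r], fun j => by simp [sum_add_distrib, hδcol, c]⟩
  obtain ⟨B, hB, hB'⟩ := (exists_mem_doublyStochastic_eq_smul_iff (s := m)
    (M := Matrix.of fun i j => (W i j)⁻ + δ i j) (Nat.cast_nonneg _)).2
      ⟨fun i j => add_nonneg (negPart_nonneg _) (hδ i j),
       fun i => by simp [sum_add_distrib, hδrow, hneg, sum_sub_distrib, hrow, r, m],
       fun j => by simp [sum_add_distrib, hδcol, hneg, sum_sub_distrib, hcol, c, m]⟩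
  refine ⟨A, hA, B, hB, ?_⟩
  rw [← hA', ← hB']
  ext i j
  simp [hneg]

noncomputable def gridVolume (Q : ℝ → ℝ → ℝ) (m i j : ℕ) : ℝ :=
  Q ((i + 1 : ℕ) / m) ((j + 1 : ℕ) / m) - Q (i / m) ((j + 1 : ℕ) / m) -
    Q ((i + 1 : ℕ) / m) (j / m) + Q (i / m) (j / m)

/-- The bilinear interpolation of `Q` on the grid `(i / m, j / m)`, written through grid volumes. -/
noncomputable def gridInterp (Q : ℝ → ℝ → ℝ) (m : ℕ) (x y : ℝ) : ℝ :=
  ∑ i : Fin m, ∑ j : Fin m, gridVolume Q m i j * (cellCDF m i x * cellCDF m j y)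

theorem natCast_div_mem_Icc {i m : ℕ} (h : i ≤ m) : (i : ℝ) / m ∈ Icc (0 : ℝ) 1 :=
  ⟨by positivity, div_le_one_of_le₀ (by exact_mod_cast h) (Nat.cast_nonneg m)⟩

section QuasiCopula

variable {Q : ℝ → ℝ → ℝ} (hQ : IsQuasiCopula Q) {m : ℕ}
include hQ

theorem IsQuasiCopula.swap : IsQuasiCopula fun x y => Q y x :=
  ⟨fun x hx => ⟨(hQ.1 x hx).2.1, (hQ.1 x hx).1, (hQ.1 x hx).2.2.2, (hQ.1 x hx).2.2.1⟩,
    fun _ hx₁ _ hx₂ _ hy h => hQ.2.2.1 _ hy _ hx₁ _ hx₂ h,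
    fun _ hx _ hy₁ _ hy₂ h => hQ.2.1 _ hy₁ _ hy₂ _ hx h,
    fun _ hx₁ _ hx₂ _ hy₁ _ hy₂ => (hQ.2.2.2 _ hy₁ _ hy₂ _ hx₁ _ hx₂).trans_eq (add_comm _ _)⟩

theorem sum_gridVolume_right (hm : 0 < m) {i : ℕ} (hi : i < m) :
    ∑ j : Fin m, gridVolume Q m i j = (m : ℝ)⁻¹ := by
  have htel : ∀ j, gridVolume Q m i j =
      (Q ((i + 1 : ℕ) / m) ((j + 1 : ℕ) / m) - Q (i / m) ((j + 1 : ℕ) / m)) -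
        (Q ((i + 1 : ℕ) / m) (j / m) - Q (i / m) (j / m)) := fun j => by rw [gridVolume]; ring
  rw [Fin.sum_univ_eq_sum_range (gridVolume Q m i) m, sum_congr rfl fun j _ => htel j,
    sum_range_sub (fun j : ℕ => Q ((i + 1 : ℕ) / m) (j / m) - Q (i / m) (j / m)),
    div_self (by positivity : (m : ℝ) ≠ 0), Nat.cast_zero, zero_div,
    (hQ.1 _ (natCast_div_mem_Icc hi)).2.2.1, (hQ.1 _ (natCast_div_mem_Icc hi.le)).2.2.1,
    (hQ.1 _ (natCast_div_mem_Icc hi)).1, (hQ.1 _ (natCast_div_mem_Icc hi.le)).1]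
  push_cast
  ring

omit hQ in
theorem gridVolume_swap (i j : ℕ) : gridVolume (fun x y => Q y x) m i j = gridVolume Q m j i := by
  unfold gridVolume
  ring

theorem sum_gridVolume_left (hm : 0 < m) {j : ℕ} (hj : j < m) :
    ∑ i : Fin m, gridVolume Q m i j = (m : ℝ)⁻¹ := by
  simpa [gridVolume_swap] using sum_gridVolume_right hQ.swap hm hj

theorem gridVolume_le {i j : ℕ} (hi : i < m) (hj : j < m) : gridVolume Q m i j ≤ (m : ℝ)⁻¹ := by
  have hlip := hQ.2.2.2 _ (natCast_div_mem_Icc hi) _ (natCast_div_mem_Icc hi) _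
    (natCast_div_mem_Icc hj.le) _ (natCast_div_mem_Icc hj)
  have hmono := hQ.2.2.1 _ (natCast_div_mem_Icc hi.le) _ (natCast_div_mem_Icc hj.le) _
    (natCast_div_mem_Icc hj) (by gcongr; omega)
  have hstep : |((j + 1 : ℕ) : ℝ) / m - j / m| = (m : ℝ)⁻¹ := by
    push_cast
    rw [← sub_div, add_sub_cancel_left, abs_of_nonneg (by positivity), one_div]
  rw [sub_self, abs_zero, zero_add, hstep] at hlip
  unfold gridVolume
  linarith [(abs_le.1 hlip).2]

theorem exists_gridInterp_eq_sub_checkerboard (hm : 0 < m) :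
    ∃ A ∈ doublyStochastic ℝ (Fin m), ∃ B ∈ doublyStochastic ℝ (Fin m), ∀ x y,
      gridInterp Q m x y = (m + 1) * checkerboard A x y - m * checkerboard B x y := by
  have hm' : (m : ℝ) ≠ 0 := by positivity
  obtain ⟨A, hA, B, hB, hW⟩ := Matrix.exists_mem_doublyStochastic_eq_sub
    (Matrix.of fun i j : Fin m => (m : ℝ) * gridVolume Q m i j)
    (fun i => by simp [← mul_sum, sum_gridVolume_right hQ hm i.is_lt, hm'])
    (fun j => by simp [← mul_sum, sum_gridVolume_left hQ hm j.is_lt, hm'])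
    (fun i j => by
      simpa [hm'] using mul_le_mul_of_nonneg_left (gridVolume_le hQ i.is_lt j.is_lt)
        (Nat.cast_nonneg m))
  refine ⟨A, hA, B, hB, fun x y => ?_⟩
  have hV : ∀ i j : Fin m, gridVolume Q m i j = (m : ℝ)⁻¹ * ((m + 1) * A i j - m * B i j) :=
    fun i j => by
      have := congrFun (congrFun hW i) j
      simp only [Matrix.of_apply, Fintype.card_fin, Matrix.sub_apply, Matrix.smul_apply,
        smul_eq_mul] at this
      rw [← this]
      field_simp
  simp only [gridInterp, checkerboard, hV, mul_sum, ← sum_sub_distrib]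
  exact sum_congr rfl fun i _ => sum_congr rfl fun j _ => by ring

theorem exists_gridInterp_eq_bilinear (hm : 0 < m) {x y : ℝ} (hx : x ∈ Icc (0 : ℝ) 1)
    (hy : y ∈ Icc (0 : ℝ) 1) :
    ∃ k < m, ∃ l < m, ∃ u ∈ Icc (0 : ℝ) 1, ∃ v ∈ Icc (0 : ℝ) 1,
      (k : ℝ) + u = m * x ∧ (l : ℝ) + v = m * y ∧
      gridInterp Q m x y =
        (1 - u) * ((1 - v) * Q (k / m) (l / m) + v * Q (k / m) ((l + 1 : ℕ) / m)) +
        u * ((1 - v) * Q ((k + 1 : ℕ) / m) (l / m) +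
          v * Q ((k + 1 : ℕ) / m) ((l + 1 : ℕ) / m)) := by
  obtain ⟨k, hk, u, hu, hku, hsumx⟩ := exists_sum_cellCDF_mul_sub hm hx
  obtain ⟨l, hl, v, hv, hlv, hsumy⟩ := exists_sum_cellCDF_mul_sub hm hy
  refine ⟨k, hk, l, hl, u, hu, v, hv, hku, hlv, ?_⟩
  set R : ℕ → ℝ := fun t => (1 - v) * Q (t / m) (l / m) + v * Q (t / m) ((l + 1 : ℕ) / m)
  have hcol : ∀ i : Fin m, ∑ j : Fin m, gridVolume Q m i j * cellCDF m j y = R (i + 1) - R i := by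
    intro i
    have := hsumy fun j => Q ((i + 1 : ℕ) / m) (j / m) - Q (i / m) (j / m)
    simp only [Nat.cast_zero, zero_div, (hQ.1 _ (natCast_div_mem_Icc i.is_lt)).1,
      (hQ.1 _ (natCast_div_mem_Icc i.is_lt.le)).1, sub_zero] at this
    calc ∑ j : Fin m, gridVolume Q m i j * cellCDF m j y
        = ∑ j : Fin m, cellCDF m j y * ((Q ((i + 1 : ℕ) / m) ((j + 1 : ℕ) / m) -
            Q (i / m) ((j + 1 : ℕ) / m)) - (Q ((i + 1 : ℕ) / m) (j / m) - Q (i / m) (j / m))) :=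
          sum_congr rfl fun j _ => by rw [gridVolume]; ring
      _ = R (i + 1) - R i := by rw [this]; simp only [R]; ring
  have := hsumx R
  simp only [R, Nat.cast_zero, zero_div, (hQ.1 _ (natCast_div_mem_Icc hl.le)).2.1,
    (hQ.1 _ (natCast_div_mem_Icc hl)).2.1, mul_zero, add_zero, sub_zero] at this
  rw [← this, gridInterp]
  refine sum_congr rfl fun i _ => ?_
  rw [← hcol i, mul_sum]
  exact sum_congr rfl fun j _ => by ring

theorem gridInterp_sub_mem_Icc (hm : 0 < m) {x y : ℝ} (hx : x ∈ Icc (0 : ℝ) 1)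
    (hy : y ∈ Icc (0 : ℝ) 1) : gridInterp Q m x y - Q x y ∈ Icc (-(2 / (m : ℝ))) (2 / m) := by
  obtain ⟨k, hk, l, hl, u, hu, v, hv, hku, hlv, hinterp⟩ :=
    exists_gridInterp_eq_bilinear hQ hm hx hy
  have hm' : (0 : ℝ) < m := by positivity
  have hnear : ∀ {a : ℕ} {t w : ℝ}, (a : ℝ) + w = m * t → w ∈ Icc (0 : ℝ) 1 →
      |(a : ℝ) / m - t| ≤ 1 / m ∧ |((a + 1 : ℕ) : ℝ) / m - t| ≤ 1 / m := by
    intro a t w h hw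
    obtain rfl : t = (a + w) / m := by field_simp; linarith
    push_cast
    constructor <;> rw [abs_le] <;> constructor <;> field_simp <;> linarith [hw.1, hw.2]
  obtain ⟨hkx, hkx'⟩ := hnear hku hu
  obtain ⟨hly, hly'⟩ := hnear hlv hv
  have hcorner : ∀ a b : ℕ, a ≤ m → b ≤ m → |(a : ℝ) / m - x| ≤ 1 / m →
      |(b : ℝ) / m - y| ≤ 1 / m → Q (a / m) (b / m) - Q x y ∈ Icc (-(2 / (m : ℝ))) (2 / m) := by
    intro a b ha hb hax hby
    have := hQ.2.2.2 _ hx _ (natCast_div_mem_Icc ha) _ hy _ (natCast_div_mem_Icc hb)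
    rw [Set.mem_Icc, ← abs_le, show 2 / (m : ℝ) = 1 / m + 1 / m by ring]
    linarith
  have hconv : ∀ {a b w : ℝ}, w ∈ Icc (0 : ℝ) 1 → a ∈ Icc (-(2 / (m : ℝ))) (2 / m) →
      b ∈ Icc (-(2 / (m : ℝ))) (2 / m) → (1 - w) * a + w * b ∈ Icc (-(2 / (m : ℝ))) (2 / m) :=
    fun hw ha hb => convex_Icc _ _ ha hb (sub_nonneg.2 hw.2) hw.1 (by ring)
  have key : gridInterp Q m x y - Q x y =
      (1 - u) * ((1 - v) * (Q (k / m) (l / m) - Q x y) +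
        v * (Q (k / m) ((l + 1 : ℕ) / m) - Q x y)) +
      u * ((1 - v) * (Q ((k + 1 : ℕ) / m) (l / m) - Q x y) +
        v * (Q ((k + 1 : ℕ) / m) ((l + 1 : ℕ) / m) - Q x y)) := by
    rw [hinterp]
    ring
  rw [key]
  exact hconv hu (hconv hv (hcorner _ _ hk.le hl.le hkx hly) (hcorner _ _ hk.le hl hkx hly'))
    (hconv hv (hcorner _ _ hk hl.le hkx' hly) (hcorner _ _ hk hl hkx' hly'))

theorem tendstoUniformlyOn_gridInterp :
    TendstoUniformlyOn (fun m p => gridInterp Q m p.1 p.2) (fun p => Q p.1 p.2) atTop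
      (Icc (0 : ℝ) 1 ×ˢ Icc (0 : ℝ) 1) := by
  rw [Metric.tendstoUniformlyOn_iff]
  intro ε hε
  filter_upwards [eventually_gt_atTop 0,
    (tendsto_const_div_atTop_nhds_zero_nat 2).eventually (gt_mem_nhds hε)] with m hm hmε p hp
  have hIcc := gridInterp_sub_mem_Icc hQ hm hp.1 hp.2
  rw [dist_comm, Real.dist_eq, abs_lt]
  constructor <;> linarith [hIcc.1, hIcc.2]

theorem IsQuasiCopula.exists_tendstoUniformlyOn_sum_copula :
    ∃ (w : ℕ → ℕ → ℝ) (H : ℕ → ℕ → ℝ × ℝ → ℝ), (∀ n s, IsCopula fun x y => H n s (x, y)) ∧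
      TendstoUniformlyOn (fun n => ∑ s ∈ range 2, w n s • H n s) (fun p => Q p.1 p.2) atTop
        (Icc (0 : ℝ) 1 ×ˢ Icc (0 : ℝ) 1) := by
  choose A hA B hB hAB using
    fun n : ℕ => exists_gridInterp_eq_sub_checkerboard hQ (m := n + 1) n.succ_pos
  refine ⟨fun n s => if s = 0 then (n + 1 + 1 : ℝ) else -(n + 1 : ℝ),
    fun n s p => checkerboard (if s = 0 then A n else B n) p.1 p.2,
    fun n s => isCopula_checkerboard n.succ_pos (by split_ifs; exacts [hA n, hB n]),
    fun u hu => ((tendsto_add_atTop_nat 1).eventually (tendstoUniformlyOn_gridInterp hQ u hu)).mono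
      fun n hn p hp => ?_⟩
  convert hn p hp using 2
  simp [sum_range_succ, hAB]
  ring

end QuasiCopula

theorem Finset.sum_range_mod {M : Type*} [AddCommMonoid M] (f : ℕ → M) (k r : ℕ) :
    ∑ t ∈ range r, f (t % k) = (r / k) • ∑ s ∈ range k, f s + ∑ s ∈ range (r % k), f s := by
  rcases Nat.eq_zero_or_pos k with rfl | hk
  · simp
  have hfull : ∀ q, ∑ t ∈ range (k * q), f (t % k) = q • ∑ s ∈ range k, f s := by
    intro q
    induction q with
    | zero => simp
    | succ q ih =>
      rw [Nat.mul_succ, sum_range_add, ih, succ_nsmul]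
      congr 1
      exact sum_congr rfl fun s hs => by rw [Nat.mul_add_mod, Nat.mod_eq_of_lt (mem_range.1 hs)]
  conv_lhs => rw [← Nat.div_add_mod r k]
  rw [sum_range_add, hfull]
  congr 1
  exact sum_congr rfl fun s hs => by
    rw [Nat.mul_add_mod, Nat.mod_eq_of_lt ((mem_range.1 hs).trans (Nat.mod_lt r hk))]

section Blocks

variable (L : ℕ → ℕ)

def blockStart (n : ℕ) : ℕ := ∑ i ∈ range n, L i

/-- Position `j` of the concatenation of blocks of lengths `L 0, L 1, …` is the entry
`blockOffset L j` of block `blockIndex L j`. -/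
def blockIndex (j : ℕ) : ℕ := Nat.findGreatest (fun n => blockStart L n ≤ j) j

def blockOffset (j : ℕ) : ℕ := j - blockStart L (blockIndex L j)

theorem blockStart_succ (n : ℕ) : blockStart L (n + 1) = blockStart L n + L n :=
  sum_range_succ L n

theorem blockStart_mono : Monotone (blockStart L) := fun _ _ h =>
  sum_le_sum_of_subset (range_subset_range.2 h)

theorem blockStart_blockIndex_le (j : ℕ) : blockStart L (blockIndex L j) ≤ j :=
  Nat.findGreatest_spec (P := fun n => blockStart L n ≤ j) (Nat.zero_le j) (by simp [blockStart])

variable {L} (hL : ∀ n, 0 < L n)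
include hL

theorem le_blockStart (n : ℕ) : n ≤ blockStart L n := by
  simpa [blockStart] using card_nsmul_le_sum (range n) L 1 fun i _ => hL i

theorem le_blockIndex {n j : ℕ} (h : blockStart L n ≤ j) : n ≤ blockIndex L j :=
  Nat.le_findGreatest ((le_blockStart hL n).trans h) h

theorem lt_blockStart_blockIndex_succ (j : ℕ) : j < blockStart L (blockIndex L j + 1) := by
  by_contra! h
  exact Nat.not_succ_le_self _ (le_blockIndex hL h)

theorem blockIndex_eq {n j : ℕ} (h₁ : blockStart L n ≤ j) (h₂ : j < blockStart L (n + 1)) :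
    blockIndex L j = n := by
  refine le_antisymm ?_ (le_blockIndex hL h₁)
  by_contra! h
  exact (h₂.trans_le (blockStart_mono L h)).not_ge (blockStart_blockIndex_le L j)

theorem sum_range_blockStart_add {M : Type*} [AddCommMonoid M] (τ : ℕ → ℕ → M) {n r : ℕ}
    (hr : r ≤ L n) :
    ∑ j ∈ range (blockStart L n + r), τ (blockIndex L j) (blockOffset L j) =
      ∑ i ∈ range n, ∑ t ∈ range (L i), τ i t + ∑ t ∈ range r, τ n t := by
  have hstep : ∀ n r, r ≤ L n →
      ∑ j ∈ range (blockStart L n + r), τ (blockIndex L j) (blockOffset L j) =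
        ∑ j ∈ range (blockStart L n), τ (blockIndex L j) (blockOffset L j) +
          ∑ t ∈ range r, τ n t := by
    intro n r hr
    rw [sum_range_add]
    congr 1
    refine sum_congr rfl fun t ht => ?_
    have ht : t < L n := (mem_range.1 ht).trans_le hr
    rw [blockOffset, blockIndex_eq hL (Nat.le_add_right _ _) (by rw [blockStart_succ]; omega),
      Nat.add_sub_cancel_left]
  have hblocks : ∀ n,
      ∑ j ∈ range (blockStart L n), τ (blockIndex L j) (blockOffset L j) =
        ∑ i ∈ range n, ∑ t ∈ range (L i), τ i t := by
    intro n
    induction n with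
    | zero => simp [blockStart]
    | succ n ih => rw [blockStart_succ, hstep n (L n) le_rfl, ih, sum_range_succ]
  rw [hstep n r hr, hblocks]

end Blocks

theorem sum_range_div_smul_mod {M : Type*} [AddCommGroup M] [Module ℝ M] (a : ℕ → ℝ) (g : ℕ → M)
    (k r : ℕ) (K : ℝ) :
    ∑ t ∈ range r, (a (t % k) / K) • g (t % k) =
      ((r / k : ℕ) / K) • ∑ s ∈ range k, a s • g s + ∑ s ∈ range (r % k), (a s / K) • g s := by
  rw [sum_range_mod (fun s => (a s / K) • g s), ← Nat.cast_smul_eq_nsmul ℝ, smul_sum, smul_sum]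
  congr 1
  exact sum_congr rfl fun s _ => by rw [smul_smul, smul_smul]; ring_nf

theorem abs_sum_range_div_mul_le {k r : ℕ} (hr : r ≤ k) (c g B : ℕ → ℝ) (hg : ∀ s, |g s| ≤ B s)
    {K : ℝ} (hK : 0 < K) : |∑ s ∈ range r, c s / K * g s| ≤ (∑ s ∈ range k, |c s| * B s) / K := by
  rw [sum_div]
  calc |∑ s ∈ range r, c s / K * g s| ≤ ∑ s ∈ range r, |c s| * B s / K := by
        refine (abs_sum_le_sum_abs _ _).trans (sum_le_sum fun s _ => ?_)
        rw [abs_mul, abs_div, abs_of_pos hK, div_mul_eq_mul_div]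
        gcongr
        exact hg s
    _ ≤ ∑ s ∈ range k, |c s| * B s / K :=
        sum_le_sum_of_subset_of_nonneg (range_subset_range.2 hr) fun s _ _ =>
          div_nonneg (mul_nonneg (abs_nonneg _) ((abs_nonneg _).trans (hg s))) hK.le

theorem abs_add_mul_sub_add_sub_le {a b t z q : ℝ} (hq : q ∈ Icc (0 : ℝ) 1) :
    |a + q * (b - a) + t - z| ≤ |a - z| + |b - a| + |t| :=
  calc |a + q * (b - a) + t - z| ≤ |a - z| + |q * (b - a)| + |t| :=
        (abs_add_three _ _ _).trans_eq' (by ring_nf)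
    _ ≤ |a - z| + |b - a| + |t| := by
        rw [abs_mul, abs_of_nonneg hq.1]
        gcongr
        exact mul_le_of_le_one_left (abs_nonneg _) hq.2

section Series

variable {α : Type*} {S : Set α} {f : α → ℝ}

theorem tendstoUniformlyOn_of_abs_sub_le {L : ℕ → ℕ} (hL : ∀ n, 0 < L n) {Φ F : ℕ → α → ℝ}
    {e : ℕ → ℝ} (hF : TendstoUniformlyOn F f atTop S) (he : Tendsto e atTop (𝓝 0))
    (hΦ : ∀ n r, r < L n → ∀ p ∈ S,
      |Φ (blockStart L n + r) p - f p| ≤ |F n p - f p| + |F (n + 1) p - F n p| + e n) :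
    TendstoUniformlyOn Φ f atTop S := by
  rw [Metric.tendstoUniformlyOn_iff] at hF ⊢
  intro ε hε
  obtain ⟨n₀, hn₀⟩ := eventually_atTop.1 <|
    (hF (ε / 4) (by positivity)).and (he.eventually (gt_mem_nhds (by positivity : 0 < ε / 4)))
  refine eventually_atTop.2 ⟨blockStart L n₀, fun N hN p hp => ?_⟩
  have hstart := blockStart_blockIndex_le L N
  have hnext := lt_blockStart_blockIndex_succ hL N
  rw [blockStart_succ] at hnext
  have hbound := hΦ (blockIndex L N) (blockOffset L N) (by rw [blockOffset]; omega) p hp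
  rw [blockOffset, Nat.add_sub_cancel' hstart] at hbound
  have hn := le_blockIndex hL hN
  generalize blockIndex L N = n at hbound hn
  obtain ⟨h₁, h₂⟩ := hn₀ n hn
  have h₃ := (hn₀ (n + 1) (by omega)).1 p hp
  have h₄ := abs_sub_le (F (n + 1) p) (f p) (F n p)
  specialize h₁ p hp
  rw [Real.dist_eq, abs_sub_comm] at h₁ h₃ ⊢
  rw [abs_sub_comm (f p)] at h₄
  linarith

theorem TendstoUniformlyOn.exists_series_of_sub_eq_sum {F : ℕ → α → ℝ}
    (hF : TendstoUniformlyOn F f atTop S) (hF₀ : F 0 = 0) {k : ℕ} (hk : 0 < k)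
    (c : ℕ → ℕ → ℝ) (G : ℕ → ℕ → α → ℝ) (hG : ∀ n s, ∃ B, ∀ p ∈ S, |G n s p| ≤ B)
    (hFG : ∀ n, F (n + 1) - F n = ∑ s ∈ range k, c n s • G n s) :
    ∃ (γ : ℕ → ℝ) (C : ℕ → α → ℝ), (∀ j, ∃ n, ∃ s < k, C j = G n s) ∧
      TendstoUniformlyOn (fun N p => ∑ j ∈ range N, γ j * C j p) f atTop S := by
  choose B hB using hG
  -- Block `n` of the series consists of `K n` copies of the `k` terms `(c n s / K n) • G n s`;
  -- `K n` is so large that a partial sum of one copy is at most `1 / (n + 1)` on `S`.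
  obtain ⟨K, hK_def⟩ : ∃ K : ℕ → ℕ,
      ∀ n, K n = ⌈(n + 1) * ∑ s ∈ range k, |c n s| * B n s⌉₊ + 1 := ⟨_, fun _ => rfl⟩
  obtain ⟨L, hL_def⟩ : ∃ L : ℕ → ℕ, ∀ n, L n = k * K n := ⟨_, fun _ => rfl⟩
  have hK : ∀ n, (0 : ℝ) < K n := fun n => by rw [hK_def]; positivity
  have hL : ∀ n, 0 < L n := fun n => by rw [hL_def, hK_def]; positivity
  have hblock : ∀ n, ∑ t ∈ range (L n), (c n (t % k) / K n) • G n (t % k) = F (n + 1) - F n :=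
    fun n => by
      rw [sum_range_div_smul_mod, hL_def, Nat.mul_div_cancel_left _ hk, Nat.mul_mod_right,
        range_zero, sum_empty, add_zero, div_self (hK n).ne', one_smul, hFG]
  refine ⟨fun j => c (blockIndex L j) (blockOffset L j % k) /
      K (blockIndex L j), fun j => G (blockIndex L j) (blockOffset L j % k),
    fun j => ⟨_, _, Nat.mod_lt _ hk, rfl⟩,
    tendstoUniformlyOn_of_abs_sub_le hL hF tendsto_one_div_add_atTop_nhds_zero_nat
      fun n r hr p hp => ?_⟩
  have hpartial := congrFun (sum_range_blockStart_add hL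
    (fun n t => (c n (t % k) / K n) • G n (t % k)) hr.le) p
  rw [sum_congr rfl fun i _ => hblock i, sum_range_sub, hF₀, sub_zero, sum_range_div_smul_mod,
    ← hFG, ← add_assoc] at hpartial
  simp only [Finset.sum_apply, Pi.add_apply, Pi.smul_apply, Pi.sub_apply, smul_eq_mul]
    at hpartial
  rw [hpartial]
  have hq : ((r / k : ℕ) / K n : ℝ) ∈ Icc (0 : ℝ) 1 := by
    refine ⟨by positivity, (div_le_one (hK n)).2 ?_⟩
    exact_mod_cast (Nat.div_lt_of_lt_mul (hL_def n ▸ hr)).le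
  have htail : |∑ s ∈ range (r % k), c n s / K n * G n s p| ≤ 1 / (n + 1) := by
    refine (abs_sum_range_div_mul_le (Nat.mod_lt _ hk).le (c n) (G n · p) (B n)
      (fun s => hB n s p hp) (hK n)).trans ?_
    rw [div_le_div_iff₀ (hK n) (by positivity), one_mul, mul_comm, hK_def]
    push_cast
    linarith [Nat.le_ceil ((n + 1) * ∑ s ∈ range k, |c n s| * B n s)]
  exact (abs_add_mul_sub_add_sub_le hq).trans (by gcongr)

theorem TendstoUniformlyOn.exists_series_of_eq_sum {k : ℕ} {w : ℕ → ℕ → ℝ} {H : ℕ → ℕ → α → ℝ}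
    (hF : TendstoUniformlyOn (fun n => ∑ s ∈ range k, w n s • H n s) f atTop S) (hk : 0 < k)
    (hH : ∀ n s, ∃ B, ∀ p ∈ S, |H n s p| ≤ B) :
    ∃ (γ : ℕ → ℝ) (C : ℕ → α → ℝ), (∀ j, ∃ n, ∃ s < k, C j = H n s) ∧
      TendstoUniformlyOn (fun N p => ∑ j ∈ range N, γ j * C j p) f atTop S := by
  -- prepend `0` to the sequence, so that its increments sum to it
  set w' : ℕ → ℕ → ℝ := fun n s => if n = 0 then 0 else w (n - 1) s
  have hF' : TendstoUniformlyOn (fun n => ∑ s ∈ range k, w' n s • H (n - 1) s) f atTop S :=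
    fun u hu => by
      filter_upwards [(tendsto_sub_atTop_nat 1).eventually (hF u hu), eventually_ge_atTop 1]
        with n hn hn1
      simpa [w', Nat.one_le_iff_ne_zero.1 hn1] using hn
  obtain ⟨γ, C, hC, hconv⟩ := hF'.exists_series_of_sub_eq_sum (by simp [w']) (k := k + k)
    (by omega) (fun n s => if s < k then w n s else -w' n (s - k))
    (fun n s => if s < k then H n s else H (n - 1) (s - k))
    (fun n s => by split_ifs; exacts [hH n s, hH _ _])
    (fun n => by
      rw [sum_range_add, sub_eq_add_neg, ← sum_neg_distrib]
      congr 1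
      · exact sum_congr rfl fun s hs => by simp [w', mem_range.1 hs]
      · exact sum_congr rfl fun s _ => by simp)
  refine ⟨γ, C, fun j => ?_, hconv⟩
  obtain ⟨n, s, hs, hCj⟩ := hC j
  split_ifs at hCj with h
  exacts [⟨n, s, h, hCj⟩, ⟨n - 1, s - k, by omega, hCj⟩]

end Series

theorem stmt11 (Q : ℝ → ℝ → ℝ) (hQ : IsQuasiCopula Q) :
    ∃ (C : ℕ → ℝ → ℝ → ℝ) (γ : ℕ → ℝ),
      (∀ j, IsCopula (C j)) ∧
      Filter.Tendsto (fun N => ∑ j ∈ Finset.range N, γ j) Filter.atTop (nhds 1) ∧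
      TendstoUniformlyOn
        (fun N (p : ℝ × ℝ) => ∑ j ∈ Finset.range N, γ j * C j p.1 p.2)
        (fun p => Q p.1 p.2) Filter.atTop (Icc (0:ℝ) 1 ×ˢ Icc (0:ℝ) 1) := by
  obtain ⟨w, H, hH, hHF⟩ := hQ.exists_tendstoUniformlyOn_sum_copula
  obtain ⟨γ, C, hC, hconv⟩ := hHF.exists_series_of_eq_sum two_pos fun n s =>
    ⟨1, fun p hp => (hH n s).abs_le_one hp.1 hp.2⟩
  have hCcop : ∀ j, IsCopula fun x y => C j (x, y) := fun j => by
    obtain ⟨n, s, -, hCj⟩ := hC j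
    simpa [hCj] using hH n s
  refine ⟨fun j x y => C j (x, y), γ, hCcop, ?_, hconv⟩
  have h11 := hconv.tendsto_at (show ((1 : ℝ), (1 : ℝ)) ∈ Icc (0 : ℝ) 1 ×ˢ Icc (0 : ℝ) 1 from
    ⟨right_mem_Icc.2 zero_le_one, right_mem_Icc.2 zero_le_one⟩)
  simp only [(hQ.1 1 (right_mem_Icc.2 zero_le_one)).2.2.1] at h11
  refine h11.congr fun N => sum_congr rfl fun j _ => ?_
  rw [show C j (1, 1) = 1 from ((hCcop j).1 1 (right_mem_Icc.2 zero_le_one)).2.2.1, mul_one]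
end

section
/- Let Q be a quasi-copula on [0,1]² such that Q = αA + βB for some copulas A, B and real numbers α, β. Then α + β = 1 and α_Q < ∞, where α_Q = sup_{n≥1} max{ max_i 2ⁿ Σ_{j=1}^{2ⁿ} V_Q(R_{ij}ⁿ)⁺ , max_j 2ⁿ Σ_{i=1}^{2ⁿ} V_Q(R_{ij}ⁿ)⁺ } and R_{ij}ⁿ = [(i−1)/2ⁿ, i/2ⁿ]×[(j−1)/2ⁿ, j/2ⁿ]. -/
open Set

lemma grid_mem (n k : ℕ) (hk : k ≤ 2^n) : (k : ℝ) / 2^n ∈ Icc (0:ℝ) 1 := by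
  constructor
  · positivity
  · rw [div_le_one (by positivity)]
    exact_mod_cast hk

lemma dyadVol_decomp (Q A B : ℝ → ℝ → ℝ) (α β : ℝ)
    (hrep : ∀ x ∈ Icc (0:ℝ) 1, ∀ y ∈ Icc (0:ℝ) 1,
      Q x y = α * A x y + β * B x y) (n : ℕ) (i j : Fin (2^n)) :
    dyadVol Q n i j = α * dyadVol A n i j + β * dyadVol B n i j := by
  have hi1 : ((i:ℕ):ℝ) / 2^n ∈ Icc (0:ℝ) 1 := grid_mem n i (le_of_lt i.2)
  have hi2 : (((i:ℕ):ℝ)+1) / 2^n ∈ Icc (0:ℝ) 1 := by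
    have := grid_mem n ((i:ℕ)+1) i.2
    push_cast at this; exact this
  have hj1 : ((j:ℕ):ℝ) / 2^n ∈ Icc (0:ℝ) 1 := grid_mem n j (le_of_lt j.2)
  have hj2 : (((j:ℕ):ℝ)+1) / 2^n ∈ Icc (0:ℝ) 1 := by
    have := grid_mem n ((j:ℕ)+1) j.2
    push_cast at this; exact this
  unfold dyadVol
  rw [hrep _ hi2 _ hj2, hrep _ hi1 _ hj2, hrep _ hi2 _ hj1, hrep _ hi1 _ hj1]
  ring

lemma dyadVol_nonneg (C : ℝ → ℝ → ℝ) (hC : IsCopula C) (n : ℕ) (i j : Fin (2^n)) :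
    0 ≤ dyadVol C n i j := by
  have hi1 : ((i:ℕ):ℝ) / 2^n ∈ Icc (0:ℝ) 1 := grid_mem n i (le_of_lt i.2)
  have hi2 : (((i:ℕ):ℝ)+1) / 2^n ∈ Icc (0:ℝ) 1 := by
    have := grid_mem n ((i:ℕ)+1) i.2
    push_cast at this; exact this
  have hj1 : ((j:ℕ):ℝ) / 2^n ∈ Icc (0:ℝ) 1 := grid_mem n j (le_of_lt j.2)
  have hj2 : (((j:ℕ):ℝ)+1) / 2^n ∈ Icc (0:ℝ) 1 := by
    have := grid_mem n ((j:ℕ)+1) j.2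
    push_cast at this; exact this
  have h1 : ((i:ℕ):ℝ)/2^n ≤ (((i:ℕ):ℝ)+1)/2^n := by gcongr; linarith
  have h2 : ((j:ℕ):ℝ)/2^n ≤ (((j:ℕ):ℝ)+1)/2^n := by gcongr; linarith
  have := hC.2 _ hi1 _ hi2 _ hj1 _ hj2 h1 h2
  unfold dyadVol
  linarith

lemma sum_dyadVol_row (C : ℝ → ℝ → ℝ) (hC : IsCopula C) (n : ℕ) (i : Fin (2^n)) :
    ∑ j : Fin (2^n), dyadVol C n i j = 1 / 2^n := by
  have hi1 : ((i:ℕ):ℝ) / 2^n ∈ Icc (0:ℝ) 1 := grid_mem n i (le_of_lt i.2)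
  have hi2 : (((i:ℕ):ℝ)+1) / 2^n ∈ Icc (0:ℝ) 1 := by
    have := grid_mem n ((i:ℕ)+1) i.2
    push_cast at this; exact this
  set F : ℕ → ℝ := fun k => C ((((i:ℕ):ℝ)+1)/2^n) ((k:ℝ)/2^n) - C (((i:ℕ):ℝ)/2^n) ((k:ℝ)/2^n) with hF
  have key : ∀ j : Fin (2^n), dyadVol C n i j = (fun k : ℕ => F (k+1) - F k) (j:ℕ) := by
    intro j
    simp only [hF]
    unfold dyadVol
    push_cast
    ring
  rw [Finset.sum_congr rfl (fun j _ => key j),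
    Fin.sum_univ_eq_sum_range (fun k : ℕ => F (k+1) - F k), Finset.sum_range_sub]
  simp only [hF]
  have h2n : ((2^n : ℕ) : ℝ) / 2^n = 1 := by
    push_cast; field_simp
  rw [h2n]
  have e1 := (hC.1 _ hi2).1
  have e2 := (hC.1 _ hi1).1
  have e4 : C ((((i:ℕ):ℝ)+1)/2^n) 1 = (((i:ℕ):ℝ)+1)/2^n := (hC.1 _ hi2).2.2.1
  have e5 : C (((i:ℕ):ℝ)/2^n) 1 = ((i:ℕ):ℝ)/2^n := (hC.1 _ hi1).2.2.1
  simp only [Nat.cast_zero, zero_div, e1, e2, e4, e5]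
  ring

lemma sum_dyadVol_col (C : ℝ → ℝ → ℝ) (hC : IsCopula C) (n : ℕ) (j : Fin (2^n)) :
    ∑ i : Fin (2^n), dyadVol C n i j = 1 / 2^n := by
  have hj1 : ((j:ℕ):ℝ) / 2^n ∈ Icc (0:ℝ) 1 := grid_mem n j (le_of_lt j.2)
  have hj2 : (((j:ℕ):ℝ)+1) / 2^n ∈ Icc (0:ℝ) 1 := by
    have := grid_mem n ((j:ℕ)+1) j.2
    push_cast at this; exact this
  set F : ℕ → ℝ := fun k => C ((k:ℝ)/2^n) ((((j:ℕ):ℝ)+1)/2^n) - C ((k:ℝ)/2^n) (((j:ℕ):ℝ)/2^n) with hF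
  have key : ∀ i : Fin (2^n), dyadVol C n i j = (fun k : ℕ => F (k+1) - F k) (i:ℕ) := by
    intro i
    simp only [hF]
    unfold dyadVol
    push_cast
    ring
  rw [Finset.sum_congr rfl (fun i _ => key i),
    Fin.sum_univ_eq_sum_range (fun k : ℕ => F (k+1) - F k), Finset.sum_range_sub]
  simp only [hF]
  have h2n : ((2^n : ℕ) : ℝ) / 2^n = 1 := by
    push_cast; field_simp
  rw [h2n]
  have e1 := (hC.1 _ hj2).2.1
  have e2 := (hC.1 _ hj1).2.1
  have e4 : C 1 ((((j:ℕ):ℝ)+1)/2^n) = (((j:ℕ):ℝ)+1)/2^n := (hC.1 _ hj2).2.2.2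
  have e5 : C 1 (((j:ℕ):ℝ)/2^n) = ((j:ℕ):ℝ)/2^n := (hC.1 _ hj1).2.2.2
  simp only [Nat.cast_zero, zero_div, e1, e2, e4, e5]
  ring

theorem stmt14 (Q A B : ℝ → ℝ → ℝ) (α β : ℝ)
    (hQ : IsQuasiCopula Q) (hA : IsCopula A) (hB : IsCopula B)
    (hrep : ∀ x ∈ Icc (0:ℝ) 1, ∀ y ∈ Icc (0:ℝ) 1,
      Q x y = α * A x y + β * B x y) :
    α + β = 1 ∧ BddAbove (alphaSet Q) := by
  have h11 : (1:ℝ) ∈ Icc (0:ℝ) 1 := by norm_num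
  have hQ1 : Q 1 1 = 1 := (hQ.1 1 h11).2.2.2
  have hA1 : A 1 1 = 1 := (hA.1 1 h11).2.2.2
  have hB1 : B 1 1 = 1 := (hB.1 1 h11).2.2.2
  have hsum : α + β = 1 := by
    have := hrep 1 h11 1 h11
    rw [hQ1, hA1, hB1] at this
    linarith
  refine ⟨hsum, ⟨|α| + |β|, ?_⟩⟩
  rintro r ⟨n, hn, hcase⟩
  have hbound : ∀ i j : Fin (2^n),
      max (dyadVol Q n i j) 0 ≤ |α| * dyadVol A n i j + |β| * dyadVol B n i j := by
    intro i j
    have hA0 := dyadVol_nonneg A hA n i j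
    have hB0 := dyadVol_nonneg B hB n i j
    apply max_le
    · rw [dyadVol_decomp Q A B α β hrep n i j]
      have h1 : α * dyadVol A n i j ≤ |α| * dyadVol A n i j :=
        mul_le_mul_of_nonneg_right (le_abs_self α) hA0
      have h2 : β * dyadVol B n i j ≤ |β| * dyadVol B n i j :=
        mul_le_mul_of_nonneg_right (le_abs_self β) hB0
      linarith
    · positivity
  have hpow : (0:ℝ) < 2^n := by positivity
  rcases hcase with ⟨i, hi⟩ | ⟨j, hj⟩
  · rw [hi]
    have hs : ∑ j : Fin (2^n), max (dyadVol Q n i j) 0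
        ≤ |α| * (1/2^n) + |β| * (1/2^n) := by
      calc ∑ j : Fin (2^n), max (dyadVol Q n i j) 0
          ≤ ∑ j : Fin (2^n), (|α| * dyadVol A n i j + |β| * dyadVol B n i j) :=
            Finset.sum_le_sum (fun j _ => hbound i j)
        _ = |α| * (1/2^n) + |β| * (1/2^n) := by
            rw [Finset.sum_add_distrib, ← Finset.mul_sum, ← Finset.mul_sum,
              sum_dyadVol_row A hA n i, sum_dyadVol_row B hB n i]
    calc (2:ℝ)^n * ∑ j : Fin (2^n), max (dyadVol Q n i j) 0
        ≤ 2^n * (|α| * (1/2^n) + |β| * (1/2^n)) := by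
          exact mul_le_mul_of_nonneg_left hs (le_of_lt hpow)
      _ = |α| + |β| := by field_simp
  · rw [hj]
    have hs : ∑ i : Fin (2^n), max (dyadVol Q n i j) 0
        ≤ |α| * (1/2^n) + |β| * (1/2^n) := by
      calc ∑ i : Fin (2^n), max (dyadVol Q n i j) 0
          ≤ ∑ i : Fin (2^n), (|α| * dyadVol A n i j + |β| * dyadVol B n i j) :=
            Finset.sum_le_sum (fun i _ => hbound i j)
        _ = |α| * (1/2^n) + |β| * (1/2^n) := by
            rw [Finset.sum_add_distrib, ← Finset.mul_sum, ← Finset.mul_sum,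
              sum_dyadVol_col A hA n j, sum_dyadVol_col B hB n j]
    calc (2:ℝ)^n * ∑ i : Fin (2^n), max (dyadVol Q n i j) 0
        ≤ 2^n * (|α| * (1/2^n) + |β| * (1/2^n)) := by
          exact mul_le_mul_of_nonneg_left hs (le_of_lt hpow)
      _ = |α| + |β| := by field_simp
end
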